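/- arXiv:2504.01563 — 10 statements merged into one kernel-verified Lean document; each statement's English description precedes it below -/
import Mathlib

section
/- Let x : ℕ → ℂ be a sequence and a ∈ ℂ with |a| > 1. Let D_a be the difference operator on sequences defined by (D_a x)_0 = x_0 and (D_a x)_n = x_n − a·x_{n−1} for n ≥ 1. Suppose k ∈ ℕ is such that the sequence D_a^k x is unbounded while the sequence D_a^{k+1} x is bounded. Then the limit lim_{n→∞} x_n/(n^k · a^n) exists in ℂ and is nonzero. -/
/-!
Put `z = D_a^k x`. Since `D_a z` is bounded, `z n / a ^ n = ∑_{i ≤ n} (D_a z) i / a ^ i` are the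
partial sums of a geometrically convergent series. Its sum `L` is nonzero: otherwise `z n / a ^ n`
would be minus a tail of the series, hence `O(‖a‖⁻ⁿ)`, and `z` would be bounded.
Undoing one `D_a` sums these quotients once more; by the hockey-stick identity
`∑_{i ≤ n} (i + m).choose m = (n + m + 1).choose (m + 1)`, induction gives
`x n / a ^ n ~ L (n + k).choose k ~ L n ^ k / k!`.
-/

/-- The difference operator on sequences: `(Da a x) 0 = x 0` and
`(Da a x) n = x n - a * x (n-1)` for `n ≥ 1`. -/
def Da (a : ℂ) (x : ℕ → ℂ) : ℕ → ℂ
  | 0 => x 0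
  | n + 1 => x (n + 1) - a * x n

/-- A sequence of complex numbers is bounded. -/
def BoundedSeq (y : ℕ → ℂ) : Prop := ∃ M : ℝ, 0 < M ∧ ∀ n, ‖y n‖ ≤ M

open Filter Finset Asymptotics Topology
open scoped Nat

theorem div_pow_eq_sum_Da {a : ℂ} (ha : a ≠ 0) (z : ℕ → ℂ) (n : ℕ) :
    z n / a ^ n = ∑ i ∈ range (n + 1), Da a z i / a ^ i := by
  induction n with
  | zero => simp [Da]
  | succ n ih =>
    rw [sum_range_succ, ← ih, Da]
    field_simp
    ring

theorem norm_div_pow_le {y : ℕ → ℂ} {M : ℝ} (hM : ∀ n, ‖y n‖ ≤ M) (a : ℂ) (i : ℕ) :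
    ‖y i / a ^ i‖ ≤ M * ‖a‖⁻¹ ^ i := by
  rw [norm_div, norm_pow, div_eq_mul_inv, ← inv_pow]
  exact mul_le_mul_of_nonneg_right (hM i) (by positivity)

theorem BoundedSeq.summable_div_pow {y : ℕ → ℂ} (hy : BoundedSeq y) {a : ℂ} (ha : 1 < ‖a‖) :
    Summable fun i => y i / a ^ i := by
  obtain ⟨M, -, hM⟩ := hy
  exact Summable.of_norm_bounded
    ((summable_geometric_of_lt_one (by positivity) (inv_lt_one_of_one_lt₀ ha)).mul_left M)
    (norm_div_pow_le hM a)

theorem tendsto_div_pow_tsum_Da {a : ℂ} (ha : 1 < ‖a‖) {z : ℕ → ℂ} (hz : BoundedSeq (Da a z)) :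
    Tendsto (fun n => z n / a ^ n) atTop (𝓝 (∑' i, Da a z i / a ^ i)) := by
  have ha0 : a ≠ 0 := norm_pos_iff.mp (one_pos.trans ha)
  refine (((hz.summable_div_pow ha).hasSum.tendsto_sum_nat).comp
    (tendsto_add_atTop_nat 1)).congr fun n => ?_
  exact (div_pow_eq_sum_Da ha0 z n).symm

theorem BoundedSeq.of_tsum_Da_eq_zero {a : ℂ} (ha : 1 < ‖a‖) {z : ℕ → ℂ}
    (hz : BoundedSeq (Da a z)) (h0 : ∑' i, Da a z i / a ^ i = 0) : BoundedSeq z := by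
  have ha0 : a ≠ 0 := norm_pos_iff.mp (one_pos.trans ha)
  have hsum := hz.summable_div_pow ha
  obtain ⟨M, hM0, hM⟩ := hz
  set r := ‖a‖⁻¹
  have hr0 : 0 < r := by positivity
  have hr1 : r < 1 := inv_lt_one_of_one_lt₀ ha
  refine ⟨M * r * (1 - r)⁻¹, by have := sub_pos.2 hr1; positivity, fun n => ?_⟩
  have htail : z n / a ^ n = -∑' i, Da a z (i + (n + 1)) / a ^ (i + (n + 1)) := by
    rw [div_pow_eq_sum_Da ha0, eq_neg_iff_add_eq_zero, hsum.sum_add_tsum_nat_add, h0]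
  have hbound : ‖∑' i, Da a z (i + (n + 1)) / a ^ (i + (n + 1))‖ ≤ M * r ^ (n + 1) * (1 - r)⁻¹ :=
    tsum_of_norm_bounded ((hasSum_geometric_of_lt_one hr0.le hr1).mul_left (M * r ^ (n + 1)))
      fun i => (norm_div_pow_le hM a _).trans_eq (by ring)
  calc ‖z n‖ = ‖a‖ ^ n * ‖z n / a ^ n‖ := by
        rw [norm_div, norm_pow, mul_div_cancel₀ _ (by positivity)]
    _ ≤ ‖a‖ ^ n * (M * r ^ (n + 1) * (1 - r)⁻¹) := by
        rw [htail, norm_neg]; gcongr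
    _ = (‖a‖ * r) ^ n * (M * r * (1 - r)⁻¹) := by ring
    _ = M * r * (1 - r)⁻¹ := by rw [mul_inv_cancel₀ (by positivity), one_pow, one_mul]

theorem Asymptotics.IsLittleO.sum_range_sub_smul {E : Type*} [NormedAddCommGroup E]
    [NormedSpace ℝ E] {u : ℕ → E} {g : ℕ → ℝ} {L : E} (h : (fun n => u n - g n • L) =o[atTop] g)
    (hg : 0 ≤ g) (hg_sum : Tendsto (fun n => ∑ i ∈ range n, g i) atTop atTop) :
    (fun n => ∑ i ∈ range n, u i - (∑ i ∈ range n, g i) • L) =o[atTop]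
      fun n => ∑ i ∈ range n, g i := by
  simpa only [sum_sub_distrib, sum_smul] using h.sum_range hg hg_sum

theorem tendsto_sum_range_add_choose_atTop (m : ℕ) :
    Tendsto (fun n => ∑ i ∈ range n, ((i + m).choose m : ℝ)) atTop atTop := by
  refine tendsto_atTop_mono (fun n => ?_) tendsto_natCast_atTop_atTop
  calc (n : ℝ) = ∑ _i ∈ range n, (1 : ℝ) := by simp
    _ ≤ _ := sum_le_sum fun i _ => by exact_mod_cast Nat.choose_pos (Nat.le_add_left m i)

theorem isLittleO_div_pow_sub_choose_succ {a : ℂ} (ha : a ≠ 0) {w : ℕ → ℂ} {m : ℕ} {L : ℂ}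
    (h : (fun n => Da a w n / a ^ n - ((n + m).choose m : ℝ) • L) =o[atTop]
      fun n => ((n + m).choose m : ℝ)) :
    (fun n => w n / a ^ n - ((n + (m + 1)).choose (m + 1) : ℝ) • L) =o[atTop]
      fun n => ((n + (m + 1)).choose (m + 1) : ℝ) := by
  have hsum : ∀ n, ∑ i ∈ range (n + 1), ((i + m).choose m : ℝ) = (n + (m + 1)).choose (m + 1) :=
    fun n => by exact_mod_cast Nat.sum_range_add_choose n m
  have := (h.sum_range_sub_smul (fun n => by positivity) (tendsto_sum_range_add_choose_atTop m)
    ).comp_tendsto (tendsto_add_atTop_nat 1)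
  simpa only [Function.comp_def, hsum, ← div_pow_eq_sum_Da ha] using this

theorem isLittleO_div_pow_sub_choose_of_iterate {a : ℂ} (ha : a ≠ 0) {L : ℂ} (j : ℕ) {y : ℕ → ℂ}
    (h : Tendsto (fun n => (Da a)^[j] y n / a ^ n) atTop (𝓝 L)) :
    (fun n => y n / a ^ n - ((n + j).choose j : ℝ) • L) =o[atTop]
      fun n => ((n + j).choose j : ℝ) := by
  induction j generalizing y with
  | zero => simpa [isLittleO_one_iff, tendsto_sub_nhds_zero_iff] using h
  | succ j ih => exact isLittleO_div_pow_sub_choose_succ ha (ih h)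

theorem isEquivalent_add_choose (k : ℕ) :
    (fun n : ℕ => ((n + k).choose k : ℝ)) ~[atTop] fun n => (n : ℝ) ^ k / k ! := by
  have hshift : (fun n : ℕ => ((n + k : ℕ) : ℝ)) ~[atTop] fun n => (n : ℝ) := by
    refine ((isEquivalent_iff_tendsto_one ?_).2 ?_).symm
    · filter_upwards [eventually_gt_atTop 0] with n hn using by positivity
    · simpa only [Nat.cast_add, Pi.div_def] using tendsto_natCast_div_add_atTop (k : ℝ)
  exact ((isEquivalent_choose k).comp_tendsto (tendsto_add_atTop_nat k)).trans
    ((hshift.pow k).div IsEquivalent.refl)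

theorem tendsto_div_natCast_pow_of_isLittleO_choose {u : ℕ → ℂ} {k : ℕ} {L : ℂ}
    (h : (fun n => u n - ((n + k).choose k : ℝ) • L) =o[atTop]
      fun n => ((n + k).choose k : ℝ)) :
    Tendsto (fun n => u n / (n : ℂ) ^ k) atTop (𝓝 (L / k !)) := by
  have hC := isEquivalent_add_choose k
  have hsmul : (fun n => ((n + k).choose k : ℝ) • L - ((n : ℝ) ^ k / k !) • L) =o[atTop]
      fun n => (n : ℝ) ^ k / k ! := by
    have hL : (fun _ : ℕ => L) =O[atTop] fun _ => (1 : ℝ) := isBigO_const_const L one_ne_zero atTop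
    simpa only [Pi.sub_apply, sub_smul, smul_eq_mul, mul_one] using hC.isLittleO.smul_isBigO hL
  have hpow : (fun n : ℕ => (n : ℝ) ^ k / k !) =O[atTop] fun n => ‖(n : ℂ) ^ k‖ := by
    simpa [div_eq_mul_inv, mul_comm] using
      (isBigO_refl (fun n : ℕ => (n : ℝ) ^ k) atTop).const_mul_left ((k ! : ℝ)⁻¹)
  have hmain : (fun n => u n - (n : ℂ) ^ k * (L / k !)) =o[atTop] fun n => (n : ℂ) ^ k := by
    refine IsLittleO.of_norm_right
      ((((h.trans_isBigO hC.isBigO).add hsmul).trans_isBigO hpow).congr_left fun n => ?_)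
    simp only [Complex.real_smul]
    push_cast
    ring
  rw [← tendsto_sub_nhds_zero_iff]
  refine hmain.tendsto_div_nhds_zero.congr' ?_
  filter_upwards [eventually_ne_atTop 0] with n hn
  rw [sub_div, mul_div_cancel_left₀ _ (by exact_mod_cast pow_ne_zero k hn)]

theorem stmt0 (x : ℕ → ℂ) (a : ℂ) (ha : 1 < ‖a‖) (k : ℕ)
    (hk : ¬ BoundedSeq ((Da a)^[k] x)) (hk1 : BoundedSeq ((Da a)^[k + 1] x)) :
    ∃ L : ℂ, L ≠ 0 ∧
      Filter.Tendsto (fun n : ℕ => x n / ((n : ℂ) ^ k * a ^ n)) Filter.atTop (nhds L) := by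
  have ha0 : a ≠ 0 := norm_pos_iff.mp (one_pos.trans ha)
  set z := (Da a)^[k] x
  have hDz : BoundedSeq (Da a z) := by rwa [← Function.iterate_succ_apply' (Da a) k x]
  set L := ∑' i, Da a z i / a ^ i
  have hL : L ≠ 0 := fun h0 => hk (hDz.of_tsum_Da_eq_zero ha h0)
  refine ⟨L / k !, div_ne_zero hL (by exact_mod_cast k.factorial_ne_zero), ?_⟩
  have hx := isLittleO_div_pow_sub_choose_of_iterate ha0 k (tendsto_div_pow_tsum_Da ha hDz)
  simpa only [div_div, mul_comm] using tendsto_div_natCast_pow_of_isLittleO_choose hx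
end

section
/- Let x : ℕ → ℂ be a sequence and a ∈ ℂ with |a| = 1. Let D_a be the difference operator on sequences defined by (D_a x)_0 = x_0 and (D_a x)_n = x_n − a·x_{n−1} for n ≥ 1. Let m ≥ 1 be an integer such that the sequence D_a^m x is bounded. Then there exists C > 0 such that |x_n| ≤ C·n^m for every integer n ≥ 1. -/
open Finset

lemma norm_le_sum_norm_Da {a : ℂ} (ha : ‖a‖ ≤ 1) (x : ℕ → ℂ) (n : ℕ) :
    ‖x n‖ ≤ ∑ i ∈ range (n + 1), ‖Da a x i‖ := by
  induction n with
  | zero => simp [Da]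
  | succ n ih =>
    have hx : x (n + 1) = a * x n + Da a x (n + 1) := by simp [Da]
    calc ‖x (n + 1)‖ ≤ ‖a‖ * ‖x n‖ + ‖Da a x (n + 1)‖ := by
          rw [hx, ← norm_mul]; exact norm_add_le _ _
      _ ≤ ‖x n‖ + ‖Da a x (n + 1)‖ := by
          gcongr; exact mul_le_of_le_one_left (norm_nonneg _) ha
      _ ≤ ∑ i ∈ range (n + 2), ‖Da a x i‖ := by
          rw [sum_range_succ _ (n + 1)]; gcongr

lemma norm_le_of_norm_Da_le {a : ℂ} (ha : ‖a‖ ≤ 1) {x : ℕ → ℂ} {M : ℝ} {k : ℕ}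
    (hM : ∀ n, ‖Da a x n‖ ≤ M * ((n : ℝ) + 1) ^ k) (n : ℕ) :
    ‖x n‖ ≤ M * ((n : ℝ) + 1) ^ (k + 1) := by
  have hM0 : 0 ≤ M := by simpa using (norm_nonneg _).trans (hM 0)
  calc ‖x n‖ ≤ ∑ i ∈ range (n + 1), ‖Da a x i‖ := norm_le_sum_norm_Da ha x n
    _ ≤ ∑ _i ∈ range (n + 1), M * ((n : ℝ) + 1) ^ k := by
        refine sum_le_sum fun i hi => (hM i).trans ?_
        have hin : (i : ℝ) ≤ n := by exact_mod_cast Nat.lt_succ_iff.mp (mem_range.mp hi)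
        gcongr
    _ = M * ((n : ℝ) + 1) ^ (k + 1) := by
        rw [sum_const, card_range, nsmul_eq_mul]; push_cast; ring

lemma norm_le_of_norm_Da_iterate_le {a : ℂ} (ha : ‖a‖ ≤ 1) {M : ℝ} (m : ℕ) {x : ℕ → ℂ}
    (hM : ∀ n, ‖(Da a)^[m] x n‖ ≤ M) (n : ℕ) :
    ‖x n‖ ≤ M * ((n : ℝ) + 1) ^ m := by
  induction m generalizing x n with
  | zero => simpa using hM n
  | succ m ih => exact norm_le_of_norm_Da_le ha (ih hM) n

theorem stmt1_general (x : ℕ → ℂ) (a : ℂ) (ha : ‖a‖ = 1) (m : ℕ)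
    (hb : BoundedSeq ((Da a)^[m] x)) :
    ∃ C : ℝ, 0 < C ∧ ∀ n : ℕ, 1 ≤ n → ‖x n‖ ≤ C * (n : ℝ) ^ m := by
  obtain ⟨M, hM0, hM⟩ := hb
  refine ⟨M * 2 ^ m, by positivity, fun n hn => ?_⟩
  have hn' : (1 : ℝ) ≤ n := by exact_mod_cast hn
  calc ‖x n‖ ≤ M * ((n : ℝ) + 1) ^ m := norm_le_of_norm_Da_iterate_le ha.le m hM n
    _ ≤ M * (2 * n) ^ m := by gcongr; linarith
    _ = M * 2 ^ m * (n : ℝ) ^ m := by rw [mul_pow]; ring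

theorem stmt1 (x : ℕ → ℂ) (a : ℂ) (ha : ‖a‖ = 1) (m : ℕ) (hm : 1 ≤ m)
    (hb : BoundedSeq ((Da a)^[m] x)) :
    ∃ C : ℝ, 0 < C ∧ ∀ n : ℕ, 1 ≤ n → ‖x n‖ ≤ C * (n : ℝ) ^ m :=
  stmt1_general x a ha m hb
end

section
/- Let x : ℕ → ℂ be a sequence and a ∈ ℂ with |a| > 1, and suppose there exists M > 0 such that |x_n − a·x_{n−1}| ≤ M for every integer n ≥ 1. Then the sequence (x_n / a^n)_{n≥0} converges in ℂ; moreover, if the sequence (x_n) is unbounded, then the limit lim_{n→∞} x_n/a^n is nonzero. -/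
/-!
Put `y n = x n / a ^ n`. Then `y (n + 1) - y n = (x (n + 1) - a * x n) / a ^ (n + 1)`, so the
increments of `y` are dominated by the geometric sequence `M / ‖a‖ ^ (n + 1)` and `y` is Cauchy.
The same geometric tail bounds `‖y n - lim y‖` by `M / ‖a‖ ^ n / (‖a‖ - 1)`; if the limit is `0`,
multiplying by `‖a‖ ^ n` gives `‖x n‖ ≤ M / (‖a‖ - 1)` for all `n`.
-/

open Filter Topology

section DivPow

variable {𝕜 : Type*} [NormedField 𝕜] {x : ℕ → 𝕜} {a : 𝕜} {M : ℝ}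

lemma dist_div_pow_div_pow_succ (x : ℕ → 𝕜) (ha : a ≠ 0) (n : ℕ) :
    dist (x n / a ^ n) (x (n + 1) / a ^ (n + 1)) = ‖x (n + 1) - a * x n‖ / ‖a‖ ^ (n + 1) := by
  rw [dist_comm, dist_eq_norm, ← norm_pow, ← norm_div]
  congr 1
  field_simp
  ring

lemma dist_div_pow_div_pow_succ_le (ha : 1 < ‖a‖) (hbd : ∀ n, ‖x (n + 1) - a * x n‖ ≤ M)
    (n : ℕ) : dist (x n / a ^ n) (x (n + 1) / a ^ (n + 1)) ≤ M / ‖a‖ * ‖a‖⁻¹ ^ n := by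
  have ha₀ : 0 < ‖a‖ := one_pos.trans ha
  rw [dist_div_pow_div_pow_succ x (norm_pos_iff.mp ha₀), inv_pow, ← div_eq_mul_inv, div_div,
    ← pow_succ']
  exact div_le_div_of_nonneg_right (hbd n) (by positivity)

lemma cauchySeq_div_pow (ha : 1 < ‖a‖) (hbd : ∀ n, ‖x (n + 1) - a * x n‖ ≤ M) :
    CauchySeq fun n ↦ x n / a ^ n :=
  cauchySeq_of_le_geometric _ _ (inv_lt_one_of_one_lt₀ ha) (dist_div_pow_div_pow_succ_le ha hbd)

lemma norm_le_of_tendsto_div_pow_zero (ha : 1 < ‖a‖) (hbd : ∀ n, ‖x (n + 1) - a * x n‖ ≤ M)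
    (hlim : Tendsto (fun n ↦ x n / a ^ n) atTop (𝓝 0)) (n : ℕ) :
    ‖x n‖ ≤ M / (‖a‖ - 1) := by
  have ha₀ : 0 < ‖a‖ := one_pos.trans ha
  have htail := dist_le_of_le_geometric_of_tendsto _ _ (inv_lt_one_of_one_lt₀ ha)
    (dist_div_pow_div_pow_succ_le ha hbd) hlim n
  rw [dist_zero_right, norm_div, norm_pow] at htail
  have hsub : 0 < ‖a‖ - 1 := sub_pos.mpr ha
  calc ‖x n‖ = ‖x n‖ / ‖a‖ ^ n * ‖a‖ ^ n := by field_simp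
    _ ≤ M / ‖a‖ * ‖a‖⁻¹ ^ n / (1 - ‖a‖⁻¹) * ‖a‖ ^ n := by gcongr
    _ = M / (‖a‖ - 1) := by
      field_simp
      rw [one_div, inv_pow, inv_mul_cancel_right₀ (by positivity)]

end DivPow

theorem stmt3_general (x : ℕ → ℂ) (a : ℂ) (ha : 1 < ‖a‖)
    (M : ℝ)
    (hbd : ∀ n : ℕ, 1 ≤ n → ‖x n - a * x (n - 1)‖ ≤ M) :
    ∃ L : ℂ, Filter.Tendsto (fun n : ℕ => x n / a ^ n) Filter.atTop (nhds L) ∧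
      ((∀ B : ℝ, 0 < B → ∃ n : ℕ, B < ‖x n‖) → L ≠ 0) := by
  have hbd' : ∀ n, ‖x (n + 1) - a * x n‖ ≤ M := fun n ↦ by
    simpa using hbd (n + 1) (Nat.le_add_left 1 n)
  obtain ⟨L, hL⟩ := cauchySeq_tendsto_of_complete (cauchySeq_div_pow ha hbd')
  refine ⟨L, hL, fun hunbounded hL₀ ↦ ?_⟩
  subst hL₀
  obtain ⟨n, hn⟩ := hunbounded (max 1 (M / (‖a‖ - 1))) (by positivity)
  exact (norm_le_of_tendsto_div_pow_zero ha hbd' hL n).not_gt ((le_max_right _ _).trans_lt hn)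

theorem stmt3 (x : ℕ → ℂ) (a : ℂ) (ha : 1 < ‖a‖)
    (M : ℝ) (hM : 0 < M)
    (hbd : ∀ n : ℕ, 1 ≤ n → ‖x n - a * x (n - 1)‖ ≤ M) :
    ∃ L : ℂ, Filter.Tendsto (fun n : ℕ => x n / a ^ n) Filter.atTop (nhds L) ∧
      ((∀ B : ℝ, 0 < B → ∃ n : ℕ, B < ‖x n‖) → L ≠ 0) :=
  stmt3_general x a ha M hbd
end

section
/- Let μ be a positive real number that is an algebraic integer (i.e., integral over ℤ). Suppose that every complex root of the minimal polynomial of μ over ℚ has absolute value equal to μ. Then there exist positive integers a and n with μ^n = a; in fact one may take n = d, the degree of the minimal polynomial of μ over ℚ, so that μ^d is a positive integer. -/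
/-!
The constant term of the minimal polynomial of `μ`, of degree `d`, is up to sign the product of the
`d` conjugates of `μ`, so its absolute value is `μ ^ d`. Since `μ` is an algebraic integer, its
minimal polynomial over `ℚ` is that over `ℤ` (Gauss's lemma), so this constant term is an integer,
nonzero as `μ > 0`.
-/

open Polynomial

theorem Polynomial.Monic.norm_coeff_zero_eq_pow {K : Type*} [NormedField K] [IsAlgClosed K]
    {p : K[X]} (hp : p.Monic) {r : ℝ} (hr : ∀ z, p.IsRoot z → ‖z‖ = r) :
    ‖p.coeff 0‖ = r ^ p.natDegree := by
  have hsplit : p.Splits := IsAlgClosed.splits p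
  have hroots : p.roots.map (‖·‖) = Multiset.replicate p.natDegree r := by
    rw [Multiset.eq_replicate, Multiset.card_map, ← splits_iff_card_roots.1 hsplit]
    refine ⟨rfl, fun _ hx ↦ ?_⟩
    obtain ⟨z, hz, rfl⟩ := Multiset.mem_map.1 hx
    exact hr z (isRoot_of_mem_roots hz)
  rw [hsplit.coeff_zero_eq_prod_roots_of_monic hp, norm_mul, norm_pow, norm_neg, norm_one,
    one_pow, one_mul, ← Multiset.prod_replicate, ← hroots]
  exact map_multiset_prod (normHom : K →*₀ ℝ) p.roots

theorem minpoly.coeff_rat_eq_coeff_int {A : Type*} [CommRing A] [IsDomain A] [Algebra ℚ A] {x : A}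
    (hx : IsIntegral ℤ x) (n : ℕ) : (minpoly ℚ x).coeff n = (minpoly ℤ x).coeff n := by
  rw [minpoly.isIntegrallyClosed_eq_field_fractions' ℚ hx, coeff_map, eq_intCast]

theorem stmt4 (μ : ℝ) (hpos : 0 < μ) (hint : IsIntegral ℤ μ)
    (hconj : ∀ z : ℂ, Polynomial.aeval z (minpoly ℚ μ) = 0 → ‖z‖ = μ) :
    0 < (minpoly ℚ μ).natDegree ∧
      ∃ a : ℕ, 0 < a ∧ μ ^ (minpoly ℚ μ).natDegree = (a : ℝ) := by
  have hQ : IsIntegral ℚ μ := hint.tower_top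
  set p := minpoly ℚ μ
  set m := (minpoly ℤ μ).coeff 0
  refine ⟨minpoly.natDegree_pos hQ, m.natAbs, ?_⟩
  have hnorm : ‖((p.map (algebraMap ℚ ℂ)).coeff 0)‖ = μ ^ p.natDegree := by
    rw [← natDegree_map_eq_of_injective (algebraMap ℚ ℂ).injective p]
    refine ((minpoly.monic hQ).map _).norm_coeff_zero_eq_pow fun z hz ↦ hconj z ?_
    rwa [IsRoot, eval_map, ← aeval_def] at hz
  have habs : μ ^ p.natDegree = |(m : ℝ)| := by
    rw [← hnorm, coeff_map, minpoly.coeff_rat_eq_coeff_int hint, map_intCast, Complex.norm_intCast]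
  have hm : (m : ℝ) ≠ 0 := abs_pos.1 (habs ▸ pow_pos hpos _)
  exact ⟨Int.natAbs_pos.2 (mod_cast hm), by rw [habs, Nat.cast_natAbs, Int.cast_abs]⟩
end

section
/- Let ρ ≥ 1 and m ≥ 1 be integers, let A be a ρ × ρ matrix with integer entries, and let w ∈ ℤ^ρ. Let μ, μ' ∈ ℂ be such that μ is algebraic over ℚ and μ' is a root of the minimal polynomial of μ over ℚ (i.e., μ' is a Galois conjugate of μ). Suppose there exists a vector v ∈ ℂ^ρ such that the dot product w·v ≠ 0 and (μ·I_ρ − A)^m · v = 0 (where A is viewed as a complex matrix). Then there exists a vector v' ∈ ℂ^ρ such that w·v' ≠ 0 and (μ'·I_ρ − A)^m · v' = 0. -/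
/-!
Applying a ring automorphism `σ` of `ℂ` entrywise preserves matrix products and dot products and
fixes integers, so `σ` maps solutions `v` of the hypothesis for `μ` to solutions `σ ∘ v` for `σ μ`.
It remains to find `σ` with `σ μ = μ'`: the algebraic numbers in `ℂ` form a normal extension of
`ℚ`, so some automorphism of it sends `μ` to its conjugate `μ'`, and every automorphism of a
subfield of an algebraically closed field extends to the whole field.
-/

open Matrix Polynomial

-- `σ` fixes a transcendence basis `s` over `F` and acts by `e` on coefficients; since `L` is an
-- algebraic closure of `F[s]`, this automorphism of `F[s]` extends to `L`.
theorem IsAlgClosed.exists_ringEquiv_extend {F L : Type*} [Field F] [Field L] [IsAlgClosed L]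
    [Algebra F L] (e : F ≃+* F) :
    ∃ σ : L ≃+* L, ∀ x : F, σ (algebraMap F L x) = algebraMap F L (e x) := by
  obtain ⟨s, hs⟩ := exists_isTranscendenceBasis F L
  let T := Algebra.adjoin F (Set.range ((↑) : s → L))
  have : IsAlgClosure T L := IsAlgClosed.isAlgClosure_of_transcendence_basis _ hs
  let ψ : T ≃+* T := hs.1.aevalEquiv.symm.toRingEquiv.trans
    ((MvPolynomial.mapEquiv s e).trans hs.1.aevalEquiv.toRingEquiv)
  refine ⟨IsAlgClosure.equivOfEquiv L L ψ, fun x => ?_⟩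
  have hψ : ψ (algebraMap F T x) = algebraMap F T (e x) := by
    have hC : hs.1.aevalEquiv.symm (algebraMap F T x) = MvPolynomial.C x :=
      hs.1.aevalEquiv.symm.commutes x
    simp only [ψ, RingEquiv.trans_apply, AlgEquiv.coe_ringEquiv, hC, MvPolynomial.mapEquiv_apply,
      MvPolynomial.map_C]
    exact hs.1.aevalEquiv.commutes (e x)
  rw [IsScalarTower.algebraMap_apply F T L, IsAlgClosure.equivOfEquiv_algebraMap, hψ,
    ← IsScalarTower.algebraMap_apply]

theorem IsAlgClosed.exists_ringEquiv_apply_eq_of_aeval_minpoly_eq_zero {K L : Type*} [Field K]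
    [Field L] [IsAlgClosed L] [Algebra K L] {x y : L} (hx : IsAlgebraic K x)
    (hy : aeval y (minpoly K x) = 0) : ∃ σ : L ≃+* L, σ x = y := by
  let x' : algebraicClosure K L := ⟨x, mem_algebraicClosure_iff.2 hx⟩
  let y' : algebraicClosure K L :=
    ⟨y, mem_algebraicClosure_iff.2 ⟨_, minpoly.ne_zero hx.isIntegral, hy⟩⟩
  have hy' : aeval y' (minpoly K x') = 0 := by
    rw [← minpoly.algebraMap_eq Subtype.val_injective x']
    exact Subtype.val_injective ((aeval_algebraMap_apply L y' _).symm.trans hy)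
  obtain ⟨τ, hτ⟩ := minpoly.exists_algEquiv_of_root' (Algebra.IsAlgebraic.isAlgebraic x') hy'
  obtain ⟨σ, hσ⟩ := exists_ringEquiv_extend (L := L) τ.toRingEquiv
  exact ⟨σ, by simpa [hτ] using hσ x'⟩

theorem Matrix.exists_dotProduct_ne_zero_mulVec_map_eq_zero {m n R S : Type*} [Fintype n]
    [NonAssocSemiring R] [NonAssocSemiring S] {f : R →+* S} (hf : Function.Injective f)
    {M : Matrix m n R} {w : n → R} (hv : ∃ v, w ⬝ᵥ v ≠ 0 ∧ M *ᵥ v = 0) :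
    ∃ v', f ∘ w ⬝ᵥ v' ≠ 0 ∧ M.map f *ᵥ v' = 0 := by
  obtain ⟨v, hwv, hMv⟩ := hv
  refine ⟨f ∘ v, ?_, funext fun i => ?_⟩
  · rw [← RingHom.map_dotProduct]
    exact (map_ne_zero_iff f hf).2 hwv
  · rw [← RingHom.map_mulVec, hMv, Pi.zero_apply, map_zero, Pi.zero_apply]

theorem Matrix.map_smul_one_sub_map_intCast_pow {n R S : Type*} [Fintype n] [DecidableEq n]
    [CommRing R] [CommRing S] (f : R →+* S) (μ : R) (A : Matrix n n ℤ) (k : ℕ) :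
    ((μ • (1 : Matrix n n R) - A.map (Int.cast : ℤ → R)) ^ k).map f =
      (f μ • (1 : Matrix n n S) - A.map (Int.cast : ℤ → S)) ^ k := by
  rw [← RingHom.mapMatrix_apply, map_pow, map_sub, RingHom.mapMatrix_apply,
    RingHom.mapMatrix_apply, Matrix.map_map]
  simp [Matrix.map_smul', Function.comp_def]

theorem stmt5_general (ρ m : ℕ)
    (A : Matrix (Fin ρ) (Fin ρ) ℤ) (w : Fin ρ → ℤ)
    (μ μ' : ℂ) (halg : IsAlgebraic ℚ μ)
    (hconj : Polynomial.aeval μ' (minpoly ℚ μ) = 0)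
    (hv : ∃ v : Fin ρ → ℂ,
      dotProduct (fun i => (w i : ℂ)) v ≠ 0 ∧
        ((μ • (1 : Matrix (Fin ρ) (Fin ρ) ℂ) - A.map (Int.cast : ℤ → ℂ)) ^ m).mulVec v = 0) :
    ∃ v' : Fin ρ → ℂ,
      dotProduct (fun i => (w i : ℂ)) v' ≠ 0 ∧
        ((μ' • (1 : Matrix (Fin ρ) (Fin ρ) ℂ) - A.map (Int.cast : ℤ → ℂ)) ^ m).mulVec v' = 0 := by
  obtain ⟨σ, hσ⟩ := IsAlgClosed.exists_ringEquiv_apply_eq_of_aeval_minpoly_eq_zero halg hconj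
  have h := Matrix.exists_dotProduct_ne_zero_mulVec_map_eq_zero (f := (σ : ℂ →+* ℂ)) σ.injective hv
  rw [Matrix.map_smul_one_sub_map_intCast_pow] at h
  simpa [hσ, Function.comp_def] using h

theorem stmt5 (ρ m : ℕ) (hρ : 1 ≤ ρ) (hm : 1 ≤ m)
    (A : Matrix (Fin ρ) (Fin ρ) ℤ) (w : Fin ρ → ℤ)
    (μ μ' : ℂ) (halg : IsAlgebraic ℚ μ)
    (hconj : Polynomial.aeval μ' (minpoly ℚ μ) = 0)
    (hv : ∃ v : Fin ρ → ℂ,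
      dotProduct (fun i => (w i : ℂ)) v ≠ 0 ∧
        ((μ • (1 : Matrix (Fin ρ) (Fin ρ) ℂ) - A.map (Int.cast : ℤ → ℂ)) ^ m).mulVec v = 0) :
    ∃ v' : Fin ρ → ℂ,
      dotProduct (fun i => (w i : ℂ)) v' ≠ 0 ∧
        ((μ' • (1 : Matrix (Fin ρ) (Fin ρ) ℂ) - A.map (Int.cast : ℤ → ℂ)) ^ m).mulVec v' = 0 :=
  stmt5_general ρ m A w μ μ' halg hconj hv
end

section
/- Let p be a prime. Then the intersection of two p-normal sets in ℤ is again a p-normal set in ℤ. -/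
/-- An elementary `p`-normal subset of `ℤ`: a set of the form
`{x : ℤ | ∃ n₁, …, n_d ∈ ℕ, (q-1)·x = c₀ + c₁·q^{n₁} + ⋯ + c_d·q^{n_d}}`, where `q = p^e`
with `e ≥ 1`, `d ≥ 1`, and the integers `c₀, …, c_d` satisfy `(q-1) ∣ (c₀ + c₁ + ⋯ + c_d)`. -/
def IsElemPNormal (p : ℕ) (S : Set ℤ) : Prop :=
  ∃ (e d : ℕ) (c : ℕ → ℤ), 1 ≤ e ∧ 1 ≤ d ∧
    ((((p : ℤ) ^ e) - 1) ∣ ∑ i ∈ Finset.range (d + 1), c i) ∧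
    S = {x : ℤ | ∃ n : Fin d → ℕ,
      (((p : ℤ) ^ e) - 1) * x = c 0 + ∑ i : Fin d, c (i + 1) * ((p : ℤ) ^ e) ^ (n i)}

/-- A `p`-normal set in `ℤ`: a union of finitely many arithmetic progressions in `ℤ`
(sets of the form `{m·k + l | k ∈ ℤ}`) along with finitely many elementary `p`-normal
subsets of `ℤ` (the union may be empty). -/
def IsPNormalZ (p : ℕ) (S : Set ℤ) : Prop :=
  ∃ (F : Finset (ℤ × ℤ)) (N : ℕ) (T : Fin N → Set ℤ),
    (∀ i, IsElemPNormal p (T i)) ∧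
    S = (⋃ q ∈ F, {x : ℤ | ∃ k : ℤ, x = q.1 * k + q.2}) ∪ ⋃ i, T i

/-!
An elementary `p`-normal set with base `q = p ^ e` is, after clearing the factor `q - 1`, the
set of values of an exponential polynomial `c₀ + ∑ cᵢ q ^ nᵢ`. Splitting every exponent as
`nᵢ = v < V` or `nᵢ = V + r + t kᵢ` rewrites such a set as a finite union of elementary sets with
base `q ^ t`. Since `q ^ n` is eventually periodic modulo `(q - 1) m`, choosing `V, t` along
that period makes the congruence `x ≡ l [ZMOD m]` constant on each piece, which handles
intersections with arithmetic progressions. Two elementary sets are first brought to the common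
base `p ^ (e e')`; their intersection is then governed by the solutions of
`∑ aₖ q ^ tₖ = A`. If some exponent is large, the exponents split at a gap wider than
`log_q (|A| + ∑ |aₖ|)`, and the cluster above the gap must sum to zero on its own; inductively,
the solutions form finitely many families `tₖ = γₖ + s (j k)` in which each cluster `j⁻¹ c` is
shifted freely, so the intersection is a finite union of elementary sets.
-/

open Finset

section

def arithProg (m l : ℤ) : Set ℤ := {x : ℤ | ∃ k : ℤ, x = m * k + l}

lemma mem_arithProg {m l x : ℤ} : x ∈ arithProg m l ↔ x ≡ l [ZMOD m] := by
  rw [Int.modEq_comm, Int.modEq_iff_dvd]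
  exact ⟨fun ⟨k, hk⟩ => ⟨k, by rw [hk]; ring⟩, fun ⟨k, hk⟩ => ⟨k, by linarith⟩⟩

def IsPNormalPiece (p : ℕ) (P : Set ℤ) : Prop :=
  (∃ m l, P = arithProg m l) ∨ IsElemPNormal p P

variable {p : ℕ}

lemma isPNormalZ_empty : IsPNormalZ p ∅ :=
  ⟨∅, 0, Fin.elim0, Fin.rec0, by simp⟩

lemma isPNormalZ_arithProg (m l : ℤ) : IsPNormalZ p (arithProg m l) :=
  ⟨{(m, l)}, 0, Fin.elim0, Fin.rec0, by simp [arithProg]⟩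

lemma IsElemPNormal.isPNormalZ {S : Set ℤ} (h : IsElemPNormal p S) : IsPNormalZ p S :=
  ⟨∅, 1, fun _ => S, fun _ => h, by simp [Set.iUnion_const]⟩

lemma IsPNormalZ.union {S T : Set ℤ} (hS : IsPNormalZ p S) (hT : IsPNormalZ p T) :
    IsPNormalZ p (S ∪ T) := by
  obtain ⟨F₁, N₁, T₁, hT₁, rfl⟩ := hS
  obtain ⟨F₂, N₂, T₂, hT₂, rfl⟩ := hT
  refine ⟨F₁ ∪ F₂, N₁ + N₂, fun i => Sum.elim T₁ T₂ (finSumFinEquiv.symm i),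
    fun i => (Sum.forall.2 ⟨hT₁, hT₂⟩ : ∀ z, IsElemPNormal p (Sum.elim T₁ T₂ z)) _, ?_⟩
  rw [finSumFinEquiv.symm.surjective.iUnion_comp (Sum.elim T₁ T₂), Set.iUnion_sum,
    Finset.set_biUnion_union]
  simp only [Sum.elim_inl, Sum.elim_inr]
  exact Set.union_union_union_comm _ _ _ _

lemma isPNormalZ_biUnion {α : Type*} (s : Finset α) {f : α → Set ℤ}
    (h : ∀ a ∈ s, IsPNormalZ p (f a)) : IsPNormalZ p (⋃ a ∈ s, f a) := by
  classical
  induction s using Finset.induction_on with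
  | empty => simpa using isPNormalZ_empty
  | insert a s _ ih =>
    rw [Finset.set_biUnion_insert]
    exact IsPNormalZ.union (h a (mem_insert_self a s)) (ih fun b hb => h b (mem_insert_of_mem hb))

lemma isPNormalZ_iUnion {ι : Type*} [Finite ι] {f : ι → Set ℤ}
    (h : ∀ i, IsPNormalZ p (f i)) : IsPNormalZ p (⋃ i, f i) := by
  have := Fintype.ofFinite ι
  simpa using isPNormalZ_biUnion univ fun i _ => h i

lemma IsPNormalZ.exists_eq_iUnion {S : Set ℤ} (h : IsPNormalZ p S) :
    ∃ (ι : Type) (_ : Fintype ι) (P : ι → Set ℤ), (∀ i, IsPNormalPiece p (P i)) ∧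
      S = ⋃ i, P i := by
  obtain ⟨F, N, T, hT, rfl⟩ := h
  refine ⟨F ⊕ Fin N, inferInstance, Sum.elim (fun z => arithProg z.1.1 z.1.2) T, ?_, ?_⟩
  · rintro (z | i)
    exacts [Or.inl ⟨_, _, rfl⟩, Or.inr (hT i)]
  · simp [Set.iUnion_sum, arithProg, Set.iUnion_subtype]

lemma isPNormalZ_arithProg_inter_arithProg (m l m' l' : ℤ) :
    IsPNormalZ p (arithProg m l ∩ arithProg m' l') := by
  obtain h | ⟨x₀, hx, hx'⟩ := (arithProg m l ∩ arithProg m' l').eq_empty_or_nonempty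
  · rw [h]; exact isPNormalZ_empty
  · suffices arithProg m l ∩ arithProg m' l' = arithProg (m.lcm m') x₀ by
      rw [this]; exact isPNormalZ_arithProg _ _
    rw [mem_arithProg] at hx hx'
    ext x
    simp only [Set.mem_inter_iff, mem_arithProg, ← Int.modEq_and_modEq_iff_modEq_lcm]
    exact and_congr ⟨fun h => h.trans hx.symm, fun h => h.trans hx⟩
      ⟨fun h => h.trans hx'.symm, fun h => h.trans hx'⟩

section ExpSum

variable {ι κ : Type*} [Fintype ι] [Fintype κ]

def expSumSet (q c₀ : ℤ) (c : ι → ℤ) : Set ℤ :=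
  {x | ∃ n : ι → ℕ, (q - 1) * x = c₀ + ∑ i, c i * q ^ n i}

lemma expSumSet_comp_equiv (q c₀ : ℤ) (c : ι → ℤ) (E : κ ≃ ι) :
    expSumSet q c₀ (c ∘ E) = expSumSet q c₀ c := by
  ext x
  simp only [expSumSet, Set.mem_ofPred_eq, Function.comp_apply]
  constructor
  · rintro ⟨n, hn⟩
    exact ⟨n ∘ E.symm, by rw [hn, ← E.sum_comp]; simp⟩
  · rintro ⟨n, hn⟩
    exact ⟨n ∘ E, by rw [hn, ← E.sum_comp]; rfl⟩

lemma two_le_natCast_pow (hp : 2 ≤ p) {e : ℕ} (he : 0 < e) : (2 : ℤ) ≤ (p : ℤ) ^ e :=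
  le_trans (by exact_mod_cast hp) (le_self_pow₀ (by omega) he.ne')

lemma IsElemPNormal.exists_eq_expSumSet {S : Set ℤ} (h : IsElemPNormal p S) :
    ∃ (ι : Type) (_ : Fintype ι) (_ : Nonempty ι) (e : ℕ) (c₀ : ℤ) (c : ι → ℤ), 0 < e ∧
      ((p : ℤ) ^ e - 1) ∣ c₀ + ∑ i, c i ∧ S = expSumSet ((p : ℤ) ^ e) c₀ c := by
  obtain ⟨e, d, c, he, hd, hdvd, rfl⟩ := h
  refine ⟨Fin d, inferInstance, Fin.pos_iff_nonempty.1 hd, e, c 0, fun i => c (i + 1), he, ?_,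
    rfl⟩
  rwa [Finset.sum_range_succ', Finset.sum_range, add_comm] at hdvd

lemma isElemPNormal_expSumSet [Nonempty ι] {e : ℕ} (he : 0 < e) {c₀ : ℤ} {c : ι → ℤ}
    (hdvd : ((p : ℤ) ^ e - 1) ∣ c₀ + ∑ i, c i) :
    IsElemPNormal p (expSumSet ((p : ℤ) ^ e) c₀ c) := by
  set E := (Fintype.equivFin ι).symm
  rw [← expSumSet_comp_equiv _ _ c E]
  refine ⟨e, Fintype.card ι, fun n => Nat.casesOn n c₀ fun n =>
    if h : n < Fintype.card ι then c (E ⟨n, h⟩) else 0, he, Fintype.card_pos, ?_, ?_⟩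
  · rw [Finset.sum_range_succ', Finset.sum_range, add_comm]
    simpa [E.sum_comp] using hdvd
  · ext x
    simp [expSumSet]

lemma add_sum_mul_pow_modEq (q c₀ : ℤ) (c : ι → ℤ) (n : ι → ℕ) :
    c₀ + ∑ i, c i * q ^ n i ≡ c₀ + ∑ i, c i [ZMOD q - 1] :=
  Int.ModEq.add_left _ <| Int.ModEq.sum fun i _ => by
    simpa using ((Int.modEq_sub q 1).pow (n i)).mul_left (c i)

end ExpSum

section Rebase

variable {ι : Type*} [Fintype ι] {q : ℤ} {V t : ℕ}

def splitExp (V t k : ℕ) : Fin V ⊕ Fin t → ℕ :=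
  Sum.elim (fun v => v) fun r => V + r + t * k

lemma exists_splitExp_eq (ht : 0 < t) (n : ℕ) : ∃ z k, n = splitExp V t k z := by
  by_cases h : n < V
  · exact ⟨.inl ⟨n, h⟩, 0, rfl⟩
  · refine ⟨.inr ⟨(n - V) % t, Nat.mod_lt _ ht⟩, (n - V) / t, ?_⟩
    have := Nat.mod_add_div (n - V) t
    simp only [splitExp, Sum.elim_inr]
    omega

lemma mul_pow_splitExp (q a : ℤ) (k : ℕ) (z : Fin V ⊕ Fin t) :
    a * q ^ splitExp V t k z = Sum.elim (fun v : Fin V => a * q ^ (v : ℕ)) (fun _ => 0) z +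
      Sum.elim (fun _ => 0) (fun r : Fin t => a * q ^ (V + r : ℕ)) z * (q ^ t) ^ k := by
  rcases z with v | r
  · simp [splitExp]
  · simp [splitExp, pow_add, pow_mul, mul_assoc]

lemma pow_splitExp_modEq {M : ℤ} (hper : q ^ (V + t) ≡ q ^ V [ZMOD M]) (k : ℕ)
    (z : Fin V ⊕ Fin t) : q ^ splitExp V t k z ≡ q ^ splitExp V t 0 z [ZMOD M] := by
  rcases z with v | r
  · rfl
  induction k with
  | zero => rfl
  | succ k ih =>
    calc q ^ splitExp V t (k + 1) (.inr r) = q ^ (V + t) * q ^ (r + t * k) := by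
          simp only [splitExp, Sum.elim_inr, ← pow_add]; ring_nf
      _ ≡ q ^ V * q ^ (r + t * k) [ZMOD M] := hper.mul_right _
      _ = q ^ splitExp V t k (.inr r) := by
          simp only [splitExp, Sum.elim_inr, ← pow_add]; ring_nf
      _ ≡ _ [ZMOD M] := ih

def expSumPiece (q : ℤ) (V t : ℕ) (c₀ : ℤ) (c : ι → ℤ) (σ : ι → Fin V ⊕ Fin t) : Set ℤ :=
  {x | ∃ k : ι → ℕ, (q - 1) * x = c₀ + ∑ i, c i * q ^ splitExp V t (k i) (σ i)}

lemma expSumSet_eq_iUnion_expSumPiece (q c₀ : ℤ) (c : ι → ℤ) (V : ℕ) (ht : 0 < t) :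
    expSumSet q c₀ c = ⋃ σ : ι → Fin V ⊕ Fin t, expSumPiece q V t c₀ c σ := by
  ext x
  simp only [expSumSet, expSumPiece, Set.mem_iUnion, Set.mem_ofPred_eq]
  constructor
  · rintro ⟨n, hn⟩
    choose σ k hk using fun i => exists_splitExp_eq (V := V) ht (n i)
    exact ⟨σ, k, by simpa only [← hk] using hn⟩
  · rintro ⟨σ, k, hk⟩
    exact ⟨_, hk⟩

lemma modEq_of_mem_expSumPiece {M c₀ x : ℤ} {c : ι → ℤ} {σ : ι → Fin V ⊕ Fin t}
    (hper : q ^ (V + t) ≡ q ^ V [ZMOD M]) (hx : x ∈ expSumPiece q V t c₀ c σ) :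
    (q - 1) * x ≡ c₀ + ∑ i, c i * q ^ splitExp V t 0 (σ i) [ZMOD M] := by
  obtain ⟨k, hk⟩ := hx
  rw [hk]
  exact Int.ModEq.add_left _ <| Int.ModEq.sum fun i _ =>
    (pow_splitExp_modEq hper (k i) (σ i)).mul_left _

def rebaseConst (q : ℤ) (V t : ℕ) (c₀ : ℤ) (c : ι → ℤ) (σ : ι → Fin V ⊕ Fin t) : ℤ :=
  (∑ l ∈ range t, q ^ l) *
    (c₀ + ∑ i, Sum.elim (fun v : Fin V => c i * q ^ (v : ℕ)) (fun _ => 0) (σ i))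

def rebaseCoeff (q : ℤ) (V t : ℕ) (c : ι → ℤ) (σ : ι → Fin V ⊕ Fin t) (i : ι) : ℤ :=
  (∑ l ∈ range t, q ^ l) * Sum.elim (fun _ => 0) (fun r : Fin t => c i * q ^ (V + r : ℕ)) (σ i)

lemma geom_sum_mul_add_sum_mul_pow_splitExp (c₀ : ℤ) (c : ι → ℤ) (σ : ι → Fin V ⊕ Fin t)
    (k : ι → ℕ) :
    (∑ l ∈ range t, q ^ l) * (c₀ + ∑ i, c i * q ^ splitExp V t (k i) (σ i)) =
      rebaseConst q V t c₀ c σ + ∑ i, rebaseCoeff q V t c σ i * (q ^ t) ^ k i := by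
  simp only [mul_pow_splitExp, rebaseConst, rebaseCoeff, sum_add_distrib, mul_add, mul_sum,
    mul_assoc]
  ring

lemma expSumPiece_eq_expSumSet (hq : 0 ≤ q) (ht : 0 < t) (c₀ : ℤ) (c : ι → ℤ)
    (σ : ι → Fin V ⊕ Fin t) :
    expSumPiece q V t c₀ c σ =
      expSumSet (q ^ t) (rebaseConst q V t c₀ c σ) (rebaseCoeff q V t c σ) := by
  have hG : (∑ l ∈ range t, q ^ l) ≠ 0 := (geom_sum_pos hq ht.ne').ne'
  ext x
  simp only [expSumPiece, expSumSet, Set.mem_ofPred_eq,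
    ← geom_sum_mul_add_sum_mul_pow_splitExp, ← geom_sum_mul, mul_assoc, mul_right_inj' hG]

lemma sub_one_dvd_rebaseConst_add_sum {c₀ : ℤ} {c : ι → ℤ} (h : (q - 1) ∣ c₀ + ∑ i, c i)
    (σ : ι → Fin V ⊕ Fin t) :
    (q ^ t - 1) ∣ rebaseConst q V t c₀ c σ + ∑ i, rebaseCoeff q V t c σ i := by
  have h₀ := geom_sum_mul_add_sum_mul_pow_splitExp (q := q) c₀ c σ 0
  simp only [Pi.zero_apply, pow_zero, mul_one] at h₀
  rw [← h₀, ← geom_sum_mul]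
  exact mul_dvd_mul_left _ ((add_sum_mul_pow_modEq q c₀ c _).dvd_iff.2 h)

end Rebase

section ArithProgInter

variable {ι : Type*} [Fintype ι]

lemma exists_pow_add_modEq_pow (q : ℤ) {M : ℤ} (hM : M ≠ 0) :
    ∃ V t : ℕ, 0 < t ∧ q ^ (V + t) ≡ q ^ V [ZMOD M] := by
  obtain ⟨a, b, hab, h⟩ := Set.Finite.exists_lt_map_eq_of_forall_mem
    (f := fun n : ℕ => q ^ n % M)
    (fun n => Set.mem_Ico.2 ⟨Int.emod_nonneg _ hM, Int.emod_lt_abs _ hM⟩)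
    (Set.finite_Ico 0 |M|)
  exact ⟨a, b - a, by omega, by rw [Nat.add_sub_cancel' hab.le]; exact h.symm⟩

lemma mem_arithProg_iff_of_mem_expSumPiece {q m l c₀ x : ℤ} {V t : ℕ} {c : ι → ℤ}
    {σ : ι → Fin V ⊕ Fin t} (hq : q - 1 ≠ 0) (hper : q ^ (V + t) ≡ q ^ V [ZMOD (q - 1) * m])
    (hx : x ∈ expSumPiece q V t c₀ c σ) :
    x ∈ arithProg m l ↔
      c₀ + ∑ i, c i * q ^ splitExp V t 0 (σ i) ≡ (q - 1) * l [ZMOD (q - 1) * m] := by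
  have hx' := modEq_of_mem_expSumPiece hper hx
  rw [mem_arithProg]
  refine Iff.trans ?_ ⟨hx'.symm.trans, hx'.trans⟩
  simp only [Int.modEq_iff_dvd, ← mul_sub, mul_dvd_mul_iff_left hq]

lemma isPNormalZ_arithProg_inter_expSumSet [Nonempty ι] (hp : 2 ≤ p) {e : ℕ} (he : 0 < e)
    (m l c₀ : ℤ) {c : ι → ℤ} (hdvd : ((p : ℤ) ^ e - 1) ∣ c₀ + ∑ i, c i) :
    IsPNormalZ p (arithProg m l ∩ expSumSet ((p : ℤ) ^ e) c₀ c) := by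
  set q : ℤ := (p : ℤ) ^ e
  have hq : 2 ≤ q := two_le_natCast_pow hp he
  rcases eq_or_ne m 0 with rfl | hm
  · have hl : arithProg 0 l = {l} := by ext; simp [arithProg]
    by_cases hmem : l ∈ expSumSet q c₀ c
    · rw [hl, Set.singleton_inter_of_mem hmem, ← hl]
      exact isPNormalZ_arithProg 0 l
    · rw [hl, Set.singleton_inter_of_notMem hmem]
      exact isPNormalZ_empty
  have hq₁ : q - 1 ≠ 0 := by omega
  obtain ⟨V, t, ht, hper⟩ := exists_pow_add_modEq_pow q (mul_ne_zero hq₁ hm)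
  rw [expSumSet_eq_iUnion_expSumPiece q c₀ c V ht, Set.inter_iUnion]
  refine isPNormalZ_iUnion fun σ => ?_
  by_cases hσ : c₀ + ∑ i, c i * q ^ splitExp V t 0 (σ i) ≡ (q - 1) * l [ZMOD (q - 1) * m]
  · rw [Set.inter_eq_right.2 fun x hx => (mem_arithProg_iff_of_mem_expSumPiece hq₁ hper hx).2 hσ,
      expSumPiece_eq_expSumSet (by omega) ht, ← pow_mul]
    exact IsElemPNormal.isPNormalZ <| isElemPNormal_expSumSet (Nat.mul_pos he ht)
      (by rw [pow_mul]; exact sub_one_dvd_rebaseConst_add_sum hdvd σ)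
  · have : arithProg m l ∩ expSumPiece q V t c₀ c σ = ∅ := Set.eq_empty_of_forall_notMem
      fun x hx => hσ ((mem_arithProg_iff_of_mem_expSumPiece hq₁ hper hx.2).1 hx.1)
    rw [this]
    exact isPNormalZ_empty

end ArithProgInter

section ExpEquation

variable {ι : Type*} {q : ℤ}

/-- Coordinates with `j k = none` are frozen at `γ k`; those labelled `some c` are shifted by
the common parameter `s c`. -/
def shapeExp (γ : ι → ℕ) (j : ι → Option ι) (s : ι → ℕ) (k : ι) : ℕ :=
  γ k + (j k).elim 0 s

lemma exists_gap (E : Finset ι) (t : ι → ℕ) {g : ℕ} (hg : 0 < g) {k₀ : ι} (hk₀ : k₀ ∈ E)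
    (hbig : g * (#E + 1) ≤ t k₀) :
    ∃ s, g ≤ s ∧ (∃ k ∈ E, s ≤ t k) ∧
      ∀ k ∈ E, (s ≤ t k → t k ≤ s + g * #E) ∧ (t k < s → t k + g ≤ s) := by
  classical
  obtain ⟨kₘ, hkₘ, hM⟩ := E.exists_mem_eq_sup ⟨k₀, hk₀⟩ t
  have hle : ∀ k ∈ E, t k ≤ t kₘ := fun k hk => hM ▸ E.le_sup hk
  -- the `#E + 1` windows `(t kₘ - g (r + 1), t kₘ - g r]` cannot all meet `t '' E`
  obtain ⟨r, hr, hrE⟩ := exists_mem_notMem_of_card_lt_card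
    (s := E.image fun k => (t kₘ - t k) / g) (t := range (#E + 1))
    (card_image_le.trans_lt (by simp))
  have hr₀ : r ≠ 0 := fun h => hrE (mem_image.2 ⟨kₘ, hkₘ, by simp [h]⟩)
  have hgr : g * r ≤ g * #E := Nat.mul_le_mul_left g (by simp at hr; omega)
  have hgr₁ : g ≤ g * r := Nat.le_mul_of_pos_right g (by omega)
  have hk₀' := hle k₀ hk₀
  rw [Nat.mul_succ] at hbig
  refine ⟨t kₘ + 1 - g * r, by omega, ⟨kₘ, hkₘ, by omega⟩, fun k hk => ⟨fun _ => ?_, fun hlt => ?_⟩⟩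
  · have := hle k hk
    omega
  · have hne : (t kₘ - t k) / g ≠ r := fun h => hrE (mem_image.2 ⟨k, hk, h⟩)
    have h₁ : r ≤ (t kₘ - t k) / g := (Nat.le_div_iff_mul_le hg).2 (by rw [Nat.mul_comm]; omega)
    have h₂ : (r + 1) * g ≤ t kₘ - t k := (Nat.le_div_iff_mul_le hg).1 (by omega)
    rw [Nat.add_mul, Nat.one_mul, Nat.mul_comm] at h₂
    omega

lemma sum_filter_le_mul_pow (q : ℤ) (a : ι → ℤ) (E : Finset ι) (t : ι → ℕ) (s : ℕ) :
    ∑ k ∈ E with s ≤ t k, a k * q ^ t k = q ^ s * ∑ k ∈ E with s ≤ t k, a k * q ^ (t k - s) := by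
  rw [mul_sum]
  refine sum_congr rfl fun k hk => ?_
  rw [mul_left_comm, ← pow_add, Nat.add_sub_cancel' (mem_filter.1 hk).2]

def IsSolutionShape (q : ℤ) (a : ι → ℤ) (A : ℤ) (B : ℕ) (E : Finset ι) (γ : ι → ℕ)
    (j : ι → Option ι) : Prop :=
  (∀ k ∈ E, γ k ≤ B) ∧ (∀ k ∈ E, ∀ c, j k = some c → c ∈ E) ∧
    ∀ s, ∑ k ∈ E, a k * q ^ shapeExp γ j s k = A

lemma shapeExp_ite (t : ι → ℕ) (s : ℕ) (γ : ι → ℕ) (j : ι → Option ι) (c₀ : ι) (σ : ι → ℕ)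
    (k : ι) :
    shapeExp (fun k => if s ≤ t k then t k - s else γ k)
        (fun k => if s ≤ t k then some c₀ else j k) σ k =
      if s ≤ t k then t k - s + σ c₀ else shapeExp γ j σ k := by
  by_cases h : s ≤ t k <;> simp [shapeExp, h]

lemma IsSolutionShape.insert_cluster {a : ι → ℤ} {A : ℤ} {B : ℕ} {E : Finset ι} {t : ι → ℕ}
    {s : ℕ} {γ : ι → ℕ} {j : ι → Option ι} {c₀ : ι}
    (h : IsSolutionShape q a A B (E.filter fun k => ¬s ≤ t k) γ j) (hc₀ : c₀ ∈ E)
    (hB : ∀ k ∈ E, s ≤ t k → t k - s ≤ B)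
    (hY : ∑ k ∈ E with s ≤ t k, a k * q ^ (t k - s) = 0) :
    IsSolutionShape q a A B E (fun k => if s ≤ t k then t k - s else γ k)
      (fun k => if s ≤ t k then some c₀ else j k) := by
  obtain ⟨hγ, hj, hfam⟩ := h
  refine ⟨fun k hk => ?_, fun k hk c hc => ?_, fun σ => ?_⟩
  · dsimp only
    split_ifs with h
    exacts [hB k hk h, hγ k (mem_filter.2 ⟨hk, h⟩)]
  · dsimp only at hc
    split_ifs at hc with h
    · exact Option.some_injective _ hc ▸ hc₀
    · exact (mem_filter.1 (hj k (mem_filter.2 ⟨hk, h⟩) c hc)).1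
  · have hC : ∑ k ∈ E with s ≤ t k, a k * q ^ (t k - s + σ c₀) = 0 := by
      simp only [pow_add, ← mul_assoc, ← sum_mul, hY, zero_mul]
    calc _ = ∑ k ∈ E with s ≤ t k, a k * q ^ (t k - s + σ c₀) +
          ∑ k ∈ E with ¬s ≤ t k, a k * q ^ shapeExp γ j σ k := by
          rw [← sum_filter_add_sum_filter_not E (s ≤ t ·)]
          congr 1 <;> refine sum_congr rfl fun k hk => ?_ <;>
            simp [shapeExp_ite, (mem_filter.1 hk).2]
      _ = A := by rw [hC, zero_add, hfam]

variable [Fintype ι]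

lemma sum_filter_mul_pow_sub_eq_zero (hq : 0 < q) {a : ι → ℤ} {A : ℤ} {g s : ℕ}
    (hA : |A| + ∑ k, |a k| < q ^ g) (hgs : g ≤ s) {E : Finset ι} {t : ι → ℕ}
    (hsum : ∑ k ∈ E, a k * q ^ t k = A) (hgap : ∀ k ∈ E, t k < s → t k + g ≤ s) :
    ∑ k ∈ E with s ≤ t k, a k * q ^ (t k - s) = 0 := by
  set Y := ∑ k ∈ E with s ≤ t k, a k * q ^ (t k - s)
  set R := ∑ k ∈ E with ¬s ≤ t k, a k * q ^ t k
  have hsplit : q ^ s * Y + R = A := by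
    rw [← hsum, ← sum_filter_add_sum_filter_not E (s ≤ t ·), sum_filter_le_mul_pow]
  have hR : |R| ≤ (∑ k, |a k|) * q ^ (s - g) := by
    calc |R| ≤ ∑ k ∈ E with ¬s ≤ t k, |a k| * q ^ t k := by
          refine (abs_sum_le_sum_abs _ _).trans_eq (sum_congr rfl fun k _ => ?_)
          rw [abs_mul, abs_pow, abs_of_pos hq]
      _ ≤ ∑ k ∈ E with ¬s ≤ t k, |a k| * q ^ (s - g) := by
          refine sum_le_sum fun k hk => ?_
          have := hgap k (mem_filter.1 hk).1 (not_le.1 (mem_filter.1 hk).2)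
          gcongr
          · omega
      _ ≤ ∑ k, |a k| * q ^ (s - g) :=
          sum_le_sum_of_subset_of_nonneg (subset_univ _) fun _ _ _ => by positivity
      _ = _ := by rw [sum_mul]
  have hlt : |q ^ s * Y| < q ^ s := by
    have h₁ : 1 ≤ q ^ (s - g) := one_le_pow₀ (by omega)
    calc |q ^ s * Y| = |A - R| := by rw [← hsplit, add_sub_cancel_right]
      _ ≤ |A| + |R| := abs_sub _ _
      _ ≤ (|A| + ∑ k, |a k|) * q ^ (s - g) := by nlinarith [abs_nonneg A]
      _ < q ^ g * q ^ (s - g) := by gcongr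
      _ = q ^ s := by rw [← pow_add, Nat.add_sub_cancel' hgs]
  have := Int.eq_zero_of_abs_lt_dvd (dvd_mul_right _ _) hlt
  exact (mul_eq_zero.1 this).resolve_left (pow_ne_zero _ hq.ne')

lemma exists_isSolutionShape (hq : 0 < q) {a : ι → ℤ} {A : ℤ} {g : ℕ} (hg : 0 < g)
    (hA : |A| + ∑ k, |a k| < q ^ g) (t : ι → ℕ) (E : Finset ι)
    (hsum : ∑ k ∈ E, a k * q ^ t k = A) :
    ∃ γ j, IsSolutionShape q a A (g * (Fintype.card ι + 1)) E γ j ∧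
      ∃ s, ∀ k ∈ E, t k = shapeExp γ j s k := by
  classical
  have hE : ∀ E : Finset ι, g * (#E + 1) ≤ g * (Fintype.card ι + 1) := fun E =>
    Nat.mul_le_mul_left g (Nat.succ_le_succ (card_le_univ E))
  induction E using Finset.strongInduction with
  | H E ih =>
  by_cases hsmall : ∀ k ∈ E, t k < g * (#E + 1)
  · exact ⟨t, fun _ => none, ⟨fun k hk => (hsmall k hk).le.trans (hE E), by simp,
      fun _ => by simpa [shapeExp]⟩, 0, by simp [shapeExp]⟩
  push Not at hsmall
  obtain ⟨k₀, hk₀, hbig⟩ := hsmall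
  obtain ⟨s, hgs, ⟨c₀, hc₀E, hc₀⟩, hgap⟩ := exists_gap E t hg hk₀ hbig
  -- the top cluster `s ≤ t k` contributes zero, so the rest of `E` is a smaller solution
  have hY := sum_filter_mul_pow_sub_eq_zero hq hA hgs hsum fun k hk => (hgap k hk).2
  have hrest : ∑ k ∈ E with ¬s ≤ t k, a k * q ^ t k = A := by
    rw [← hsum, ← sum_filter_add_sum_filter_not E (s ≤ t ·), sum_filter_le_mul_pow, hY,
      mul_zero, zero_add]
  obtain ⟨γ, j, hshape, s', ht⟩ := ih _ (filter_ssubset.2 ⟨c₀, hc₀E, not_not.2 hc₀⟩) hrest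
  refine ⟨_, _, hshape.insert_cluster hc₀E (fun k hk h => ?_) hY, Function.update s' c₀ s,
    fun k hk => ?_⟩
  · have := (hgap k hk).1 h
    have := hE E
    rw [Nat.mul_succ] at this
    omega
  rw [shapeExp_ite]
  split_ifs with h
  · simp [Nat.sub_add_cancel h]
  · have hk' : k ∈ E.filter fun k => ¬s ≤ t k := mem_filter.2 ⟨hk, h⟩
    rw [ht k hk']
    unfold shapeExp
    rcases hjk : j k with _ | c
    · rfl
    · have hc : c ≠ c₀ := fun hc => (mem_filter.1 (hshape.2.1 k hk' c hjk)).2 (hc ▸ hc₀)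
      simp [Function.update_of_ne hc]

theorem exists_finset_setOf_sum_mul_pow_eq (hq : 2 ≤ q) (a : ι → ℤ) (A : ℤ) :
    ∃ G : Finset ((ι → ℕ) × (ι → Option ι)),
      {t : ι → ℕ | ∑ k, a k * q ^ t k = A} = ⋃ γj ∈ G, Set.range (shapeExp γj.1 γj.2) := by
  classical
  obtain ⟨g, hg⟩ := pow_unbounded_of_one_lt (|A| + ∑ k, |a k|) (by omega : (1 : ℤ) < q)
  have hg' : |A| + ∑ k, |a k| < q ^ (g + 1) :=
    hg.trans_le (pow_le_pow_right₀ (by omega) (Nat.le_succ g))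
  set B := (g + 1) * (Fintype.card ι + 1)
  refine ⟨((Fintype.piFinset fun _ => range (B + 1)) ×ˢ univ).filter
    fun γj => IsSolutionShape q a A B univ γj.1 γj.2, Set.ext fun t => ?_⟩
  simp only [Set.mem_ofPred_eq, Set.mem_iUnion, Set.mem_range, mem_filter, exists_prop]
  constructor
  · intro ht
    obtain ⟨γ, j, hshape, s, hs⟩ := exists_isSolutionShape (by omega) g.succ_pos hg' t univ ht
    refine ⟨(γ, j), ⟨?_, hshape⟩, s, funext fun k => (hs k (mem_univ k)).symm⟩
    simpa [Nat.lt_succ_iff] using fun k => hshape.1 k (mem_univ k)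
  · rintro ⟨γj, ⟨-, hshape⟩, s, rfl⟩
    simpa using hshape.2.2 s

def shapeConst [DecidableEq ι] (q : ℤ) (a : ι → ℤ) (γ : ι → ℕ) (j : ι → Option ι) : ℤ :=
  ∑ k with j k = none, a k * q ^ γ k

def shapeCoeff [DecidableEq ι] (q : ℤ) (a : ι → ℤ) (γ : ι → ℕ) (j : ι → Option ι) (c : ι) : ℤ :=
  ∑ k with j k = some c, a k * q ^ γ k

lemma sum_mul_pow_shapeExp [DecidableEq ι] (q : ℤ) (a : ι → ℤ) (γ : ι → ℕ) (j : ι → Option ι)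
    (s : ι → ℕ) :
    ∑ k, a k * q ^ shapeExp γ j s k = shapeConst q a γ j + ∑ c, shapeCoeff q a γ j c * q ^ s c := by
  rw [← sum_fiberwise univ j, Fintype.sum_option]
  congr 1
  · exact sum_congr rfl fun k hk => by simp [shapeExp, (mem_filter.1 hk).2]
  · refine sum_congr rfl fun c _ => ?_
    rw [shapeCoeff, sum_mul]
    exact sum_congr rfl fun k hk => by simp [shapeExp, (mem_filter.1 hk).2, pow_add, mul_assoc]

end ExpEquation

section ExpSumInter

variable {ι κ : Type*} [Fintype ι] [Fintype κ] {q : ℤ}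

lemma mem_expSumSet_inter_expSumSet_iff {a₀ b₀ x : ℤ} {a : ι → ℤ} {b : κ → ℤ} :
    x ∈ expSumSet q a₀ a ∩ expSumSet q b₀ b ↔
      ∃ t ∈ {t : ι ⊕ κ → ℕ | ∑ k, Sum.elim a (-b) k * q ^ t k = b₀ - a₀},
        (q - 1) * x = a₀ + ∑ k, Sum.elim a 0 k * q ^ t k := by
  simp only [expSumSet, Set.mem_inter_iff, Set.mem_ofPred_eq, Fintype.sum_sum_type, Sum.elim_inl,
    Sum.elim_inr, Pi.neg_apply, Pi.zero_apply, neg_mul, zero_mul, sum_neg_distrib, sum_const_zero,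
    add_zero]
  constructor
  · rintro ⟨⟨n, hn⟩, m, hm⟩
    exact ⟨Sum.elim n m, by simp only [Sum.elim_inl, Sum.elim_inr]; linarith, hn⟩
  · rintro ⟨t, ht, hx⟩
    exact ⟨⟨t ∘ Sum.inl, hx⟩, t ∘ Sum.inr, by simp only [Function.comp_apply]; linarith⟩

lemma expSumSet_inter_expSumSet_eq_biUnion [DecidableEq ι] [DecidableEq κ] (hq : 2 ≤ q)
    (a₀ : ℤ) (a : ι → ℤ) (b₀ : ℤ) (b : κ → ℤ) :
    ∃ G : Finset ((ι ⊕ κ → ℕ) × (ι ⊕ κ → Option (ι ⊕ κ))),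
      expSumSet q a₀ a ∩ expSumSet q b₀ b = ⋃ γj ∈ G,
        expSumSet q (a₀ + shapeConst q (Sum.elim a 0) γj.1 γj.2)
          (shapeCoeff q (Sum.elim a 0) γj.1 γj.2) := by
  obtain ⟨G, hG⟩ := exists_finset_setOf_sum_mul_pow_eq hq (Sum.elim a (-b)) (b₀ - a₀)
  refine ⟨G, Set.ext fun x => ?_⟩
  rw [mem_expSumSet_inter_expSumSet_iff, hG]
  simp only [Set.mem_iUnion, Set.mem_range, expSumSet, Set.mem_ofPred_eq, exists_prop, add_assoc,
    ← sum_mul_pow_shapeExp]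
  constructor
  · rintro ⟨_, ⟨γj, hγj, s, rfl⟩, hx⟩
    exact ⟨γj, hγj, s, hx⟩
  · rintro ⟨γj, hγj, s, hx⟩
    exact ⟨_, ⟨γj, hγj, s, rfl⟩, hx⟩

lemma isPNormalZ_expSumSet_inter_expSumSet [Nonempty ι] (hp : 2 ≤ p) {e e' : ℕ} (he : 0 < e)
    (he' : 0 < e') {a₀ : ℤ} {a : ι → ℤ} (b₀ : ℤ) (b : κ → ℤ)
    (ha : ((p : ℤ) ^ e - 1) ∣ a₀ + ∑ i, a i) :
    IsPNormalZ p (expSumSet ((p : ℤ) ^ e) a₀ a ∩ expSumSet ((p : ℤ) ^ e') b₀ b) := by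
  classical
  set q : ℤ := (p : ℤ)
  have hq : 0 ≤ q := by positivity
  -- pass to the common base `p ^ (e * e')`
  rw [expSumSet_eq_iUnion_expSumPiece _ a₀ a 0 he', expSumSet_eq_iUnion_expSumPiece _ b₀ b 0 he,
    Set.iUnion_inter_iUnion]
  refine isPNormalZ_iUnion fun σ => isPNormalZ_iUnion fun τ => ?_
  rw [expSumPiece_eq_expSumSet (pow_nonneg hq e) he',
    expSumPiece_eq_expSumSet (pow_nonneg hq e') he, ← pow_mul, ← pow_mul, Nat.mul_comm e' e]
  obtain ⟨G, hG⟩ := expSumSet_inter_expSumSet_eq_biUnion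
    (two_le_natCast_pow hp (Nat.mul_pos he he')) (rebaseConst (q ^ e) 0 e' a₀ a σ)
    (rebaseCoeff (q ^ e) 0 e' a σ) (rebaseConst (q ^ e') 0 e b₀ b τ) (rebaseCoeff (q ^ e') 0 e b τ)
  rw [hG]
  refine isPNormalZ_biUnion G fun γj _ => IsElemPNormal.isPNormalZ <|
    isElemPNormal_expSumSet (Nat.mul_pos he he') ?_
  have h := sum_mul_pow_shapeExp (q ^ (e * e')) (Sum.elim (rebaseCoeff (q ^ e) 0 e' a σ) 0)
    γj.1 γj.2 0
  simp only [Pi.zero_apply, pow_zero, mul_one] at h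
  rw [add_assoc, ← h]
  refine (add_sum_mul_pow_modEq _ _ _ _).dvd_iff.2 ?_
  simpa [Fintype.sum_sum_type, pow_mul] using sub_one_dvd_rebaseConst_add_sum ha σ

end ExpSumInter

lemma IsPNormalPiece.inter (hp : 2 ≤ p) {P Q : Set ℤ} (hP : IsPNormalPiece p P)
    (hQ : IsPNormalPiece p Q) : IsPNormalZ p (P ∩ Q) := by
  rcases hP with ⟨m, l, rfl⟩ | hP <;> rcases hQ with ⟨m', l', rfl⟩ | hQ
  · exact isPNormalZ_arithProg_inter_arithProg m l m' l'
  · obtain ⟨ι, _, _, e, c₀, c, he, hc, rfl⟩ := IsElemPNormal.exists_eq_expSumSet hQ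
    exact isPNormalZ_arithProg_inter_expSumSet hp he m l c₀ hc
  · obtain ⟨ι, _, _, e, c₀, c, he, hc, rfl⟩ := IsElemPNormal.exists_eq_expSumSet hP
    rw [Set.inter_comm]
    exact isPNormalZ_arithProg_inter_expSumSet hp he m' l' c₀ hc
  · obtain ⟨ι, _, _, e, a₀, a, he, ha, rfl⟩ := IsElemPNormal.exists_eq_expSumSet hP
    obtain ⟨κ, _, _, e', b₀, b, he', -, rfl⟩ := IsElemPNormal.exists_eq_expSumSet hQ
    exact isPNormalZ_expSumSet_inter_expSumSet hp he he' b₀ b ha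

end

theorem stmt8 (p : ℕ) (hp : p.Prime) (S T : Set ℤ)
    (hS : IsPNormalZ p S) (hT : IsPNormalZ p T) :
    IsPNormalZ p (S ∩ T) := by
  obtain ⟨ι, _, P, hP, rfl⟩ := hS.exists_eq_iUnion
  obtain ⟨κ, _, Q, hQ, rfl⟩ := hT.exists_eq_iUnion
  rw [Set.iUnion_inter_iUnion]
  exact isPNormalZ_iUnion fun i => isPNormalZ_iUnion fun j => (hP i).inter hp.two_le (hQ j)
end

section
/- Let p be a prime and let K = 𝔽_p(t) be the field of rational functions in one variable t over 𝔽_p. Define f : K³ → K³ by f(x, y, z) = (x^p, (x+1)^p·y^p, x^p·z^p) and let α = (t, 1, 1). Then: (a) for every n ∈ ℕ, f^n(α) = (t^{p^n}, (t+1)^{n·p^n}, t^{n·p^n}); and (b) the return set {n ∈ ℕ | the second coordinate of f^n(α) equals the third coordinate of f^n(α) plus 1} equals {p^m | m ∈ ℕ}. -/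
noncomputable section

/-- The rational function field `𝔽_p(t)`. -/
abbrev RatFuncField (p : ℕ) : Type := FractionRing (Polynomial (ZMod p))

/-- The element `t ∈ 𝔽_p(t)`. -/
def tGen (p : ℕ) : RatFuncField p :=
  algebraMap (Polynomial (ZMod p)) (RatFuncField p) Polynomial.X

/-- The endomorphism `f(x, y, z) = (x^p, (x+1)^p·y^p, x^p·z^p)` of `K³`. -/
def fMap (p : ℕ) : (RatFuncField p × RatFuncField p × RatFuncField p) →
    (RatFuncField p × RatFuncField p × RatFuncField p) :=
  fun v => (v.1 ^ p, (v.1 + 1) ^ p * v.2.1 ^ p, v.1 ^ p * v.2.2 ^ p)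

/-- The starting point `α = (t, 1, 1)`. -/
def alphaPt (p : ℕ) : RatFuncField p × RatFuncField p × RatFuncField p :=
  (tGen p, 1, 1)

open Polynomial in
lemma poly_key (p : ℕ) [Fact p.Prime] (N : ℕ)
    (h : (X + 1 : (ZMod p)[X]) ^ N = X ^ N + 1) : ∃ a : ℕ, N = p ^ a := by
  have hp := (Fact.out : p.Prime)
  rcases Nat.eq_zero_or_pos N with rfl | hN
  · exfalso
    simp only [pow_zero] at h
    have := congrArg (fun q => Polynomial.coeff q 0) h
    simp at this
  · set a := N.factorization p with ha
    set m := N / p ^ a with hm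
    have hmul : p ^ a * m = N := Nat.ordProj_mul_ordCompl_eq_self N p
    have hnd : ¬ p ∣ m := Nat.not_dvd_ordCompl hp hN.ne'
    have hchar : CharP ((ZMod p)[X]) p := inferInstance
    have h1 : (X + 1 : (ZMod p)[X]) ^ N = expand (ZMod p) (p ^ a) ((X + 1) ^ m) := by
      rw [map_pow, map_add, map_one, expand_X,
        show (X ^ p ^ a + 1 : (ZMod p)[X]) = (X + 1) ^ p ^ a from by
          rw [add_pow_char_pow, one_pow],
        ← pow_mul, hmul]
    have h2 : (X ^ N + 1 : (ZMod p)[X]) = expand (ZMod p) (p ^ a) (X ^ m + 1) := by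
      rw [map_add, map_one, map_pow, expand_X, ← pow_mul, hmul]
    rw [h1, h2] at h
    have h3 := expand_injective (pow_pos hp.pos a) h
    rcases Nat.lt_or_ge m 2 with hm2 | hm2
    · interval_cases m
      · omega
      · exact ⟨a, by omega⟩
    · exfalso
      have := congrArg (fun q => Polynomial.coeff q 1) h3
      simp only [coeff_X_add_one_pow, coeff_add, coeff_one, coeff_X_pow] at this
      have h1m : (1 : ℕ) ≠ m := by omega
      rw [if_neg h1m, if_neg one_ne_zero, Nat.choose_one_right, add_zero] at this
      exact hnd ((ZMod.natCast_eq_zero_iff m p).mp this)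

lemma charK (p : ℕ) [Fact p.Prime] : CharP (RatFuncField p) p :=
  charP_of_injective_algebraMap
    (IsFractionRing.injective (Polynomial (ZMod p)) (RatFuncField p)) p

open Polynomial in
lemma key (p : ℕ) [Fact p.Prime] (N : ℕ) :
    (tGen p + 1) ^ N = tGen p ^ N + 1 ↔ ∃ a : ℕ, N = p ^ a := by
  haveI := charK p
  constructor
  · intro h
    apply poly_key p N
    apply IsFractionRing.injective (Polynomial (ZMod p)) (RatFuncField p)
    simp only [tGen] at h
    rw [map_pow, map_add, map_one, map_add, map_pow, map_one]
    exact h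
  · rintro ⟨a, rfl⟩
    rw [add_pow_char_pow, one_pow]

theorem stmt10 (p : ℕ) [Fact p.Prime] :
    (∀ n : ℕ, (fMap p)^[n] (alphaPt p) =
      (tGen p ^ p ^ n, (tGen p + 1) ^ (n * p ^ n), tGen p ^ (n * p ^ n))) ∧
    {n : ℕ | ((fMap p)^[n] (alphaPt p)).2.1 = ((fMap p)^[n] (alphaPt p)).2.2 + 1}
      = {n : ℕ | ∃ m : ℕ, n = p ^ m} := by
  haveI := charK p
  have hp := (Fact.out : p.Prime)
  have ha : ∀ n : ℕ, (fMap p)^[n] (alphaPt p) =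
      (tGen p ^ p ^ n, (tGen p + 1) ^ (n * p ^ n), tGen p ^ (n * p ^ n)) := by
    intro n
    induction n with
    | zero => simp [alphaPt]
    | succ n ih =>
      rw [Function.iterate_succ_apply', ih, fMap]
      have h1 : (tGen p ^ p ^ n + 1) ^ p = ((tGen p + 1) ^ p ^ n) ^ p := by
        rw [add_pow_char_pow, one_pow]
      simp only [h1]
      rw [Prod.mk.injEq, Prod.mk.injEq]
      refine ⟨?_, ?_, ?_⟩
      · rw [← pow_mul, ← pow_succ]
      · rw [← pow_mul, ← pow_mul, ← pow_add]; congr 1; rw [pow_succ]; ring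
      · rw [← pow_mul, ← pow_mul, ← pow_add]; congr 1; rw [pow_succ]; ring
  refine ⟨ha, ?_⟩
  ext n
  simp only [Set.mem_setOf_eq, ha n]
  rw [key]
  constructor
  · rintro ⟨a, hNa⟩
    have hdvd : n ∣ p ^ a := ⟨p ^ n, hNa.symm⟩
    obtain ⟨b, _, rfl⟩ := (Nat.dvd_prime_pow hp).mp hdvd
    exact ⟨b, rfl⟩
  · rintro ⟨m, rfl⟩
    exact ⟨m + p ^ m, by rw [pow_add]⟩

end
end

section
/- Let Y be a set, g : Y → Y a map, and h : Y → ℝ a function with h(y) ≥ 1 for every y ∈ Y. Suppose there are an integer m ≥ 1 and real numbers a ≥ 2 and C ≥ 0 such that h(g^m(y)) ≤ a·h(y) + C for every y ∈ Y. Then for every x ∈ Y, limsup_{n→∞} h(g^n(x))^{1/n} ≤ a^{1/m}. -/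
/-!
Iterating `h ∘ g^[m] ≤ a h + C` gives `h + C ≤ a^q (h + C)` along every `m`-th step of an orbit,
since `a ≥ 2` absorbs the additive constant. Writing `n = q m + r` with `r < m`, this bounds
`h (g^[n] x)` by `K a^(n/m) ≤ K (a^(1/m))^n` for a constant `K` depending on `x`, and the `n`-th
root of `K` tends to `1`.
-/

open Filter Real Topology Finset

theorem limsup_rpow_inv_le_of_le_mul_pow {u : ℕ → ℝ} {K c : ℝ} (hu0 : ∀ n, 0 ≤ u n)
    (hc : 0 ≤ c) (hu : ∀ n, u n ≤ K * c ^ n) :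
    limsup (fun n : ℕ => u n ^ (n : ℝ)⁻¹) atTop ≤ c := by
  set K' := max K 1
  have hK' : 0 < K' := zero_lt_one.trans_le (le_max_right K 1)
  have hbound : ∀ n ≥ 1, u n ^ (n : ℝ)⁻¹ ≤ K' ^ (n : ℝ)⁻¹ * c := by
    intro n hn
    have huK' : u n ≤ K' * c ^ n := (hu n).trans (by gcongr; exact le_max_left K 1)
    calc u n ^ (n : ℝ)⁻¹ ≤ (K' * c ^ n) ^ (n : ℝ)⁻¹ := by gcongr; exact hu0 n
      _ = K' ^ (n : ℝ)⁻¹ * c := by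
        rw [mul_rpow hK'.le (by positivity), pow_rpow_inv_natCast hc (by omega)]
  have hlim : Tendsto (fun n : ℕ => K' ^ (n : ℝ)⁻¹ * c) atTop (𝓝 c) := by
    have hroot : Tendsto (fun n : ℕ => K' ^ (n : ℝ)⁻¹) atTop (𝓝 1) := by
      simpa [Function.comp_def] using ((continuousAt_const_rpow hK'.ne').tendsto.comp
        (tendsto_inv_atTop_zero.comp tendsto_natCast_atTop_atTop))
    simpa using hroot.mul_const c
  calc limsup (fun n : ℕ => u n ^ (n : ℝ)⁻¹) atTop
      ≤ limsup (fun n : ℕ => K' ^ (n : ℝ)⁻¹ * c) atTop :=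
        limsup_le_limsup (eventually_atTop.2 ⟨1, hbound⟩)
          (isCoboundedUnder_le_of_le atTop fun n => rpow_nonneg (hu0 n) _)
          hlim.isBoundedUnder_le
    _ = c := hlim.limsup_eq

theorem pow_div_le_rpow_inv_pow {a : ℝ} (ha : 1 ≤ a) (n m : ℕ) :
    a ^ (n / m) ≤ (a ^ (m : ℝ)⁻¹) ^ n := by
  rw [← rpow_natCast, ← rpow_natCast, ← rpow_mul (by linarith), ← div_eq_inv_mul]
  exact rpow_le_rpow_of_exponent_le ha Nat.cast_div_le

section Orbit

variable {Y : Type*} {g : Y → Y} {h : Y → ℝ} {m : ℕ} {a C : ℝ}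

theorem add_le_pow_mul_add_of_iterate_le (ha : 2 ≤ a) (hC : 0 ≤ C)
    (H : ∀ y, h (g^[m] y) ≤ a * h y + C) (q : ℕ) (y : Y) :
    h (g^[q * m] y) + C ≤ a ^ q * (h y + C) := by
  simpa using le_geom (u := fun k => h (g^[k * m] y) + C) (by linarith) q fun k _ => by
    have hstep := H (g^[k * m] y)
    rw [← Function.iterate_add_apply, add_comm, ← Nat.succ_mul] at hstep
    nlinarith

theorem exists_iterate_le_mul_rpow_inv_pow (h0 : ∀ y, 0 ≤ h y) (hm : 1 ≤ m) (ha : 2 ≤ a)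
    (hC : 0 ≤ C) (H : ∀ y, h (g^[m] y) ≤ a * h y + C) (x : Y) :
    ∃ K, ∀ n, h (g^[n] x) ≤ K * (a ^ (m : ℝ)⁻¹) ^ n := by
  set K := ∑ r ∈ range m, h (g^[r] x) + C
  have hK : 0 ≤ K := add_nonneg (sum_nonneg fun r _ => h0 _) hC
  refine ⟨K, fun n => ?_⟩
  have hrem : h (g^[n % m] x) ≤ ∑ r ∈ range m, h (g^[r] x) :=
    single_le_sum (f := fun r => h (g^[r] x)) (fun r _ => h0 _) (mem_range.2 (Nat.mod_lt n hm))
  calc h (g^[n] x) ≤ h (g^[n / m * m] (g^[n % m] x)) + C := by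
        rw [← Function.iterate_add_apply, Nat.div_add_mod']; linarith
    _ ≤ a ^ (n / m) * (h (g^[n % m] x) + C) := add_le_pow_mul_add_of_iterate_le ha hC H _ _
    _ ≤ K * a ^ (n / m) := by rw [mul_comm]; gcongr; linarith
    _ ≤ K * (a ^ (m : ℝ)⁻¹) ^ n := by gcongr; exact pow_div_le_rpow_inv_pow (by linarith) n m

end Orbit

theorem stmt13 {Y : Type*} (g : Y → Y) (h : Y → ℝ) (h1 : ∀ y : Y, 1 ≤ h y)
    (m : ℕ) (hm : 1 ≤ m) (a C : ℝ) (ha : 2 ≤ a) (hC : 0 ≤ C)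
    (H : ∀ y : Y, h (g^[m] y) ≤ a * h y + C) (x : Y) :
    Filter.limsup (fun n : ℕ => (h (g^[n] x)) ^ ((n : ℝ)⁻¹)) Filter.atTop
      ≤ a ^ ((m : ℝ)⁻¹) := by
  have h0 : ∀ y, 0 ≤ h y := fun y => zero_le_one.trans (h1 y)
  obtain ⟨K, hK⟩ := exists_iterate_le_mul_rpow_inv_pow h0 hm ha hC H x
  exact limsup_rpow_inv_le_of_le_mul_pow (fun n => h0 _) (by positivity) hK
end

section
/- Let p be an odd prime. In the polynomial ring 𝔽_p[X], the set {n ∈ ℕ | (X+1)^n + (X−1)^n = 2·X^n + 2} is equal to {p^a + p^b | a, b ∈ ℕ}. -/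
open Polynomial

section Aux17

variable {p : ℕ}

private lemma two_ne_zero17 (hp : p.Prime) (hodd : Odd p) : (2 : ZMod p) ≠ 0 := by
  haveI : Fact p.Prime := ⟨hp⟩
  intro h
  rw [show ((2:ZMod p)) = ((2:ℕ):ZMod p) by norm_num,
    ZMod.natCast_eq_zero_iff] at h
  have := (Nat.prime_dvd_prime_iff_eq hp Nat.prime_two).mp h
  subst this
  exact (Nat.not_even_iff_odd.mpr hodd) even_two

private lemma poly_two_ne17 (hp : p.Prime) (hodd : Odd p) :
    (2 : Polynomial (ZMod p)) ≠ 0 := by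
  intro h
  apply two_ne_zero17 hp hodd
  have := congrArg (fun q => Polynomial.coeff q 0) h
  simpa using this

private lemma frob_inj17 (hp : p.Prime) (a b : Polynomial (ZMod p))
    (h : a ^ p = b ^ p) : a = b := by
  haveI : Fact p.Prime := ⟨hp⟩
  have hsub : (a - b) ^ p = 0 := by rw [sub_pow_char, h, sub_self]
  have := pow_eq_zero_iff (n := p) hp.ne_zero |>.mp hsub
  exact sub_eq_zero.mp this

private lemma two_pow17 (hp : p.Prime) : (2 : Polynomial (ZMod p)) ^ p = 2 := by
  haveI : Fact p.Prime := ⟨hp⟩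
  have h : ((2:Polynomial (ZMod p))) = 1 + 1 := by norm_num
  rw [h, add_pow_char]
  norm_num

/-- homogeneous equation: solutions are exactly powers of p (for m ≥ 1) -/
private lemma aux17 (hp : p.Prime) (hodd : Odd p) :
    ∀ m : ℕ, 1 ≤ m →
      (X + 1 : Polynomial (ZMod p)) ^ m + (X - 1) ^ m = 2 * X ^ m →
      ∃ a : ℕ, m = p ^ a := by
  haveI : Fact p.Prime := ⟨hp⟩
  have h2 := poly_two_ne17 hp hodd
  intro m
  induction m using Nat.strong_induction_on with
  | _ m ih =>
    intro hm1 heq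
    by_cases hdvd : p ∣ m
    · obtain ⟨k, hk⟩ := hdvd
      have hp2 := hp.two_le
      have hk1 : 1 ≤ k := Nat.pos_of_ne_zero (by rintro rfl; simp at hk; omega)
      have hklt : k < m := by nlinarith
      have e1 : ((((X:Polynomial (ZMod p)) + 1) ^ k + (X - 1) ^ k)) ^ p
          = (((X:Polynomial (ZMod p)) + 1) ^ k) ^ p + ((X - 1) ^ k) ^ p :=
        add_pow_char _ _ _
      have key : ((((X:Polynomial (ZMod p)) + 1) ^ k + (X - 1) ^ k)) ^ p
          = (2 * X ^ k) ^ p := by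
        rw [e1, mul_pow, two_pow17 hp, ← pow_mul, ← pow_mul, ← pow_mul,
          Nat.mul_comm k p, ← hk]
        exact heq
      have hfrob := frob_inj17 hp _ _ key
      obtain ⟨a, ha⟩ := ih k hklt hk1 hfrob
      exact ⟨a + 1, by rw [hk, ha, pow_succ, Nat.mul_comm]⟩
    · rcases Nat.lt_or_ge m 2 with hlt | hge
      · exact ⟨0, by rw [pow_zero]; omega⟩
      have hd := congrArg derivative heq
      simp only [derivative_add, derivative_mul, derivative_pow, derivative_X,
        derivative_one, derivative_sub, derivative_ofNat, derivative_X_pow] at hd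
      have hC : (C ((m:ZMod p)) : Polynomial (ZMod p)) ≠ 0 := by
        rw [Ne, C_eq_zero, ZMod.natCast_eq_zero_iff]
        exact hdvd
      have hcan : C ((m:ZMod p)) * (((X:Polynomial (ZMod p)) + 1) ^ (m-1) + (X - 1) ^ (m-1))
          = C ((m:ZMod p)) * (2 * X ^ (m-1)) := by
        ring_nf
        ring_nf at hd
        linear_combination hd
      have heq' := mul_left_cancel₀ hC hcan
      have hm11 : 1 ≤ m - 1 := by omega
      obtain ⟨a, ha⟩ := ih (m - 1) (by omega) hm11 heq'
      exfalso
      have hm : m = p ^ a + 1 := by omega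
      have hcomp : (X + 1 : Polynomial (ZMod p)) ^ m + (X - 1) ^ m
          = 2 * X ^ m + 2 := by
        rw [hm, pow_succ, pow_succ, add_pow_char_pow, sub_pow_char_pow, pow_succ]
        ring
      rw [heq] at hcomp
      exact h2 (by linear_combination -hcomp)

end Aux17

theorem stmt17 (p : ℕ) (hp : p.Prime) (hodd : Odd p) :
    {n : ℕ | (Polynomial.X + 1 : Polynomial (ZMod p)) ^ n +
        (Polynomial.X - 1) ^ n = 2 * Polynomial.X ^ n + 2}
      = {n : ℕ | ∃ a b : ℕ, n = p ^ a + p ^ b} := by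
  haveI : Fact p.Prime := ⟨hp⟩
  have h2 := poly_two_ne17 hp hodd
  ext n
  simp only [Set.mem_setOf_eq]
  constructor
  · intro heq
    induction n using Nat.strong_induction_on with
    | _ n ih =>
      by_cases hdvd : p ∣ n
      · obtain ⟨k, hk⟩ := hdvd
        have hp2 := hp.two_le
        have hn1 : 1 ≤ n := by
          rcases Nat.eq_zero_or_pos n with h | h
          · exfalso
            subst h
            exact h2 (by linear_combination -heq)
          · exact h
        have hk1 : 1 ≤ k := Nat.pos_of_ne_zero (by rintro rfl; simp at hk; omega)
        have hklt : k < n := by nlinarith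
        have e1 : ((((X:Polynomial (ZMod p)) + 1) ^ k + (X - 1) ^ k)) ^ p
            = (((X:Polynomial (ZMod p)) + 1) ^ k) ^ p + ((X - 1) ^ k) ^ p :=
          add_pow_char _ _ _
        have e2 : ((2:Polynomial (ZMod p)) * X ^ k + 2) ^ p
            = ((2:Polynomial (ZMod p)) * X ^ k) ^ p + 2 ^ p :=
          add_pow_char _ _ _
        have key : ((((X:Polynomial (ZMod p)) + 1) ^ k + (X - 1) ^ k)) ^ p
            = (2 * X ^ k + 2) ^ p := by
          rw [e1, e2, mul_pow, two_pow17 hp, ← pow_mul, ← pow_mul, ← pow_mul,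
            Nat.mul_comm k p, ← hk]
          exact heq
        have hfrob := frob_inj17 hp _ _ key
        obtain ⟨a, b, hab⟩ := ih k hklt hfrob
        exact ⟨a + 1, b + 1, by rw [hk, hab, pow_succ, pow_succ]; ring⟩
      · have hn2 : 2 ≤ n := by
          rcases Nat.lt_or_ge n 2 with hlt | hge
          · exfalso
            interval_cases n
            · exact hdvd ⟨0, rfl⟩
            · exact h2 (by linear_combination -heq)
          · exact hge
        have hd := congrArg derivative heq
        simp only [derivative_add, derivative_mul, derivative_pow, derivative_X,
          derivative_one, derivative_sub, derivative_ofNat, derivative_X_pow] at hd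
        have hC : (C ((n:ZMod p)) : Polynomial (ZMod p)) ≠ 0 := by
          rw [Ne, C_eq_zero, ZMod.natCast_eq_zero_iff]
          exact hdvd
        have hcan : C ((n:ZMod p)) * (((X:Polynomial (ZMod p)) + 1) ^ (n-1) + (X - 1) ^ (n-1))
            = C ((n:ZMod p)) * (2 * X ^ (n-1)) := by
          ring_nf
          ring_nf at hd
          linear_combination hd
        have heq' := mul_left_cancel₀ hC hcan
        obtain ⟨a, ha⟩ := aux17 hp hodd (n - 1) (by omega) heq'
        exact ⟨a, 0, by rw [pow_zero]; omega⟩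
  · rintro ⟨a, b, rfl⟩
    rw [pow_add, pow_add, pow_add, add_pow_char_pow, add_pow_char_pow,
      sub_pow_char_pow, sub_pow_char_pow]
    ring
end

section
/- Let p be an odd prime, let K be a field extension of 𝔽_p, and let t ∈ K be transcendental over 𝔽_p. Let n, c ∈ ℕ and set N = p^n + p^{n+c}. Suppose u, v ∈ K and ε₁, ε₂, ε₃ ∈ {1, −1} satisfy (u+1)(v+1) = ε₁·(t+1)^N, u·v = ε₂·t^N, and (u−1)(v−1) = ε₃·(t−1)^N. Then ε₁ = ε₂ = ε₃ = 1 and {u, v} = {t^{p^n}, t^{p^{n+c}}} (i.e., either u = t^{p^n} and v = t^{p^{n+c}}, or u = t^{p^{n+c}} and v = t^{p^n}). -/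
/-!
Write `a = t ^ p ^ n`, `b = t ^ p ^ (n + c)`. By Frobenius the three right-hand sides are
`ε₁ (a + 1)(b + 1)`, `ε₂ a b` and `ε₃ (a - 1)(b - 1)`, and the identity
`(u + 1)(v + 1) + (u - 1)(v - 1) = 2 u v + 2` turns the hypotheses into the relation
`(ε₁ + ε₃ - 2 ε₂) a b + (ε₁ - ε₃)(a + b) + (ε₁ + ε₃ - 2) = 0`.
Since `t` is transcendental and the exponent of `a b` exceeds those of `a` and `b`, which are positive,
the coefficients of `a b` and of `1` must vanish; in odd characteristic this forces all signs to be `1`.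
Then `u + v = a + b` and `u v = a b`, so `{u, v} = {a, b}`.
-/

open Polynomial

theorem Transcendental.outer_coeffs_eq_zero_of_relation {R K : Type*} [CommRing R] [CommRing K]
    [Algebra R K] {t : K} (ht : Transcendental R t) {i j : ℕ} (hi : 0 < i) (hj : 0 < j) {a b d : R}
    (h : algebraMap R K a * t ^ (i + j) + algebraMap R K b * (t ^ i + t ^ j)
      + algebraMap R K d = 0) :
    a = 0 ∧ d = 0 := by
  set P : R[X] := C a * X ^ (i + j) + C b * (X ^ i + X ^ j) + C d
  have hP : P = 0 := by
    by_contra hP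
    exact ht ⟨P, hP, by simpa [P] using h⟩
  have hcoeff_top : P.coeff (i + j) = a := by
    simp [P, coeff_X_pow, coeff_C, hi.ne', hj.ne']
  have hcoeff_zero : P.coeff 0 = d := by
    simp [P, coeff_X_pow, coeff_C, hi.ne, hj.ne, (Nat.add_pos_left hi j).ne]
  rw [hP, coeff_zero] at hcoeff_top hcoeff_zero
  exact ⟨hcoeff_top.symm, hcoeff_zero.symm⟩

theorem eq_one_and_eq_one_of_add_eq_two {R : Type*} [CommRing R] [NoZeroDivisors R]
    [Nontrivial R] (hR : ringChar R ≠ 2) {a b : R} (ha : a = 1 ∨ a = -1)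
    (hb : b = 1 ∨ b = -1) (h : a + b = 2) : a = 1 ∧ b = 1 := by
  have h2 := Ring.two_ne_zero hR
  rcases ha with rfl | rfl <;> rcases hb with rfl | rfl
  · exact ⟨rfl, rfl⟩
  all_goals exfalso
  · exact h2 (by linear_combination -h)
  · exact h2 (by linear_combination -h)
  · exact h2 (mul_self_eq_zero.mp (by linear_combination -h))

theorem eq_and_eq_or_eq_and_eq_of_add_eq_add_of_mul_eq_mul {R : Type*} [CommRing R]
    [NoZeroDivisors R] {u v a b : R} (hsum : u + v = a + b) (hprod : u * v = a * b) :
    (u = a ∧ v = b) ∨ (u = b ∧ v = a) := by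
  have hroot : (u - a) * (u - b) = 0 := by linear_combination u * hsum - hprod
  rcases mul_eq_zero.mp hroot with hu | hu
  · have hu := sub_eq_zero.mp hu
    exact .inl ⟨hu, by linear_combination hsum - hu⟩
  · have hu := sub_eq_zero.mp hu
    exact .inr ⟨hu, by linear_combination hsum - hu⟩

theorem exists_algebraMap_eq_of_eq_one_or_eq_neg_one {R K : Type*} [CommRing R] [Ring K]
    [Algebra R K] {ε : K} (h : ε = 1 ∨ ε = -1) : ∃ e : R, (e = 1 ∨ e = -1) ∧ algebraMap R K e = ε := by
  rcases h with rfl | rfl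
  · exact ⟨1, .inl rfl, map_one _⟩
  · exact ⟨-1, .inr rfl, by simp⟩

theorem add_pow_expChar_pow_add_expChar_pow {R : Type*} [CommRing R] {p : ℕ} [ExpChar R p]
    (x y : R) (m k : ℕ) :
    (x + y) ^ (p ^ m + p ^ k) = (x ^ p ^ m + y ^ p ^ m) * (x ^ p ^ k + y ^ p ^ k) := by
  rw [pow_add, add_pow_expChar_pow, add_pow_expChar_pow]

theorem sub_pow_expChar_pow_add_expChar_pow {R : Type*} [CommRing R] {p : ℕ} [ExpChar R p]
    (x y : R) (m k : ℕ) :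
    (x - y) ^ (p ^ m + p ^ k) = (x ^ p ^ m - y ^ p ^ m) * (x ^ p ^ k - y ^ p ^ k) := by
  rw [pow_add, sub_pow_expChar_pow, sub_pow_expChar_pow]

theorem stmt18 (p : ℕ) (hp : p.Prime) (hodd : Odd p)
    (K : Type*) [Field K] [Algebra (ZMod p) K]
    (t : K) (ht : Transcendental (ZMod p) t)
    (n c : ℕ) (u v ε₁ ε₂ ε₃ : K)
    (hε₁ : ε₁ = 1 ∨ ε₁ = -1) (hε₂ : ε₂ = 1 ∨ ε₂ = -1) (hε₃ : ε₃ = 1 ∨ ε₃ = -1)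
    (h1 : (u + 1) * (v + 1) = ε₁ * (t + 1) ^ (p ^ n + p ^ (n + c)))
    (h2 : u * v = ε₂ * t ^ (p ^ n + p ^ (n + c)))
    (h3 : (u - 1) * (v - 1) = ε₃ * (t - 1) ^ (p ^ n + p ^ (n + c))) :
    ε₁ = 1 ∧ ε₂ = 1 ∧ ε₃ = 1 ∧
      ((u = t ^ p ^ n ∧ v = t ^ p ^ (n + c)) ∨ (u = t ^ p ^ (n + c) ∧ v = t ^ p ^ n)) := by
  have : Fact p.Prime := ⟨hp⟩
  have : CharP K p := charP_of_injective_algebraMap (algebraMap (ZMod p) K).injective p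
  have hchar : ringChar (ZMod p) ≠ 2 := by
    rw [ZMod.ringChar_zmod_n]; rintro rfl; exact absurd hodd (by decide)
  have hcharK : ringChar K ≠ 2 := by rwa [ringChar.eq K p, ← ZMod.ringChar_zmod_n p]
  rw [add_pow_expChar_pow_add_expChar_pow] at h1
  rw [sub_pow_expChar_pow_add_expChar_pow] at h3
  rw [pow_add] at h2
  simp only [one_pow] at h1 h3
  obtain ⟨e₁, he₁, rfl⟩ := exists_algebraMap_eq_of_eq_one_or_eq_neg_one (R := ZMod p) hε₁
  obtain ⟨e₂, -, rfl⟩ := exists_algebraMap_eq_of_eq_one_or_eq_neg_one (R := ZMod p) hε₂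
  obtain ⟨e₃, he₃, rfl⟩ := exists_algebraMap_eq_of_eq_one_or_eq_neg_one (R := ZMod p) hε₃
  obtain ⟨htop, hconst⟩ := ht.outer_coeffs_eq_zero_of_relation (pow_pos hp.pos n)
    (pow_pos hp.pos (n + c)) (a := e₁ + e₃ - 2 * e₂) (b := e₁ - e₃) (d := e₁ + e₃ - 2) (by
      simp only [map_add, map_sub, map_mul, map_ofNat]
      linear_combination 2 * h2 - h1 - h3)
  obtain ⟨rfl, rfl⟩ := eq_one_and_eq_one_of_add_eq_two hchar he₁ he₃ (by linear_combination hconst)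
  obtain rfl : e₂ = 1 := mul_left_cancel₀ (Ring.two_ne_zero hchar) (by linear_combination -htop)
  simp only [map_one, one_mul] at h1 h2 h3 ⊢
  refine ⟨trivial, trivial, trivial, eq_and_eq_or_eq_and_eq_of_add_eq_add_of_mul_eq_mul ?_ h2⟩
  exact mul_left_cancel₀ (Ring.two_ne_zero hcharK) (by linear_combination h1 - h3)
end
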